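/- arXiv:2402.12555 — 10 statements merged into one kernel-verified Lean document; each statement's English description precedes it below -/
import Mathlib

section
/- Unbiasedness of the standard G-estimation equation (single stage, correct propensity): Let H : Ω → ℝ^d be measurable, A a treatment indicator, and Y an integrable random variable. Suppose there are Borel functions ν, C : ℝ^d → ℝ with ν(H) integrable, C bounded, and E[Y | σ(H,A)] = ν(H) + A·C(H) μ-a.e., and let π : ℝ^d → ℝ be Borel with π(H) = E[A | σ(H)] μ-a.e. Then for all bounded Borel functions λ, θ : ℝ^d → ℝ, E[ λ(H)·(A − π(H))·(Y − A·C(H) + θ(H)) ] = 0. -/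
/-!
Write `f = λ(H) (A - π(H))` and `φ = λ(H) (ν(H) + θ(H))`. The integrand is
`f (Y - (ν(H) + A C(H))) + φ (A - π(H))`, where `ν(H) + A C(H)` is a version of `E[Y | H, A]`
and `π(H)` one of `E[A | H]`. The weight `f` is bounded and `σ(H, A)`-measurable, and `φ` is
integrable and `σ(H)`-measurable, so by the pull-out property each term integrates to zero.
-/

open MeasureTheory

section Residual

variable {Ω : Type*} {m m₀ : MeasurableSpace Ω} {μ : Measure Ω} {g X p : Ω → ℝ}

theorem integral_mul_eq_integral_mul_of_ae_eq_condExp (hm : m ≤ m₀) [SigmaFinite (μ.trim hm)]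
    (hg : StronglyMeasurable[m] g) (hX : Integrable X μ) (hp : p =ᵐ[μ] μ[X|m])
    (hgX : Integrable (fun ω => g ω * X ω) μ) :
    ∫ ω, g ω * X ω ∂μ = ∫ ω, g ω * p ω ∂μ :=
  calc ∫ ω, g ω * X ω ∂μ = ∫ ω, μ[g * X|m] ω ∂μ := (integral_condExp hm).symm
    _ = ∫ ω, g ω * p ω ∂μ := integral_congr_ae <|
      (condExp_mul_of_stronglyMeasurable_left hg hgX hX).trans hp.symm.mul_left

theorem integral_mul_sub_eq_zero_of_ae_eq_condExp (hm : m ≤ m₀) [SigmaFinite (μ.trim hm)]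
    (hg : StronglyMeasurable[m] g) (hX : Integrable X μ) (hp : p =ᵐ[μ] μ[X|m])
    (hgX : Integrable (fun ω => g ω * X ω) μ) (hgp : Integrable (fun ω => g ω * p ω) μ) :
    ∫ ω, g ω * (X ω - p ω) ∂μ = 0 := by
  simp_rw [mul_sub]
  rw [integral_sub hgX hgp, integral_mul_eq_integral_mul_of_ae_eq_condExp hm hg hX hp hgX,
    sub_self]

theorem ae_abs_le_of_ae_eq_condExp {R : ℝ} (hXR : ∀ᵐ ω ∂μ, |X ω| ≤ R)
    (hp : p =ᵐ[μ] μ[X|m]) : ∀ᵐ ω ∂μ, |p ω| ≤ R := by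
  filter_upwards [hp, ae_bdd_abs_condExp_of_ae_bdd_abs (m := m) hXR] with ω hpω hE
  rwa [hpω]

theorem ae_abs_sub_le_of_ae_eq_condExp {R : ℝ} (hXR : ∀ᵐ ω ∂μ, |X ω| ≤ R)
    (hp : p =ᵐ[μ] μ[X|m]) : ∀ᵐ ω ∂μ, |X ω - p ω| ≤ R + R := by
  filter_upwards [hXR, ae_abs_le_of_ae_eq_condExp hXR hp] with ω hXω hpω
  exact (abs_sub _ _).trans (add_le_add hXω hpω)

variable {β : Type*} [mβ : MeasurableSpace β] [IsFiniteMeasure μ] {Z : Ω → β} {w : β → ℝ}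

theorem integral_comp_mul_sub_eq_zero_of_ae_eq_condExp_of_bdd_left (hZ : Measurable Z)
    (hw : Measurable w) {c : ℝ} (hwc : ∀ᵐ ω ∂μ, ‖w (Z ω)‖ ≤ c) (hX : Integrable X μ)
    (hp : p =ᵐ[μ] μ[X|mβ.comap Z]) :
    ∫ ω, w (Z ω) * (X ω - p ω) ∂μ = 0 :=
  have hwZ := (hw.comp hZ).aestronglyMeasurable (μ := μ)
  integral_mul_sub_eq_zero_of_ae_eq_condExp hZ.comap_le
    (hw.comp (comap_measurable Z)).stronglyMeasurable hX hp (hX.bdd_mul hwZ hwc)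
    ((integrable_condExp.congr hp.symm).bdd_mul hwZ hwc)

theorem integral_comp_mul_sub_eq_zero_of_ae_eq_condExp_of_bdd_right (hZ : Measurable Z)
    (hw : Measurable w) (hwi : Integrable (fun ω => w (Z ω)) μ) (hX : Integrable X μ) {R : ℝ}
    (hXR : ∀ᵐ ω ∂μ, |X ω| ≤ R) (hp : p =ᵐ[μ] μ[X|mβ.comap Z]) :
    ∫ ω, w (Z ω) * (X ω - p ω) ∂μ = 0 :=
  integral_mul_sub_eq_zero_of_ae_eq_condExp hZ.comap_le
    (hw.comp (comap_measurable Z)).stronglyMeasurable hX hp (hwi.mul_bdd hX.1 hXR)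
    (hwi.mul_bdd (integrable_condExp.congr hp.symm).1 (ae_abs_le_of_ae_eq_condExp hXR hp))

end Residual

theorem standard_G_estimation_unbiased_general
    {Ω : Type*} [MeasurableSpace Ω] (μ : Measure Ω) [IsProbabilityMeasure μ]
    {d : ℕ} (H : Ω → (Fin d → ℝ)) (hH : Measurable H)
    (A : Ω → ℝ) (hA : Measurable A) (hA01 : ∀ ω, A ω = 0 ∨ A ω = 1)
    (Y : Ω → ℝ) (hY : Integrable Y μ)
    (ν C : (Fin d → ℝ) → ℝ) (hν : Measurable ν)
    (hνint : Integrable (fun ω => ν (H ω)) μ)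
    (hblip : μ[Y | MeasurableSpace.comap (fun ω => (H ω, A ω)) inferInstance]
      =ᵐ[μ] fun ω => ν (H ω) + A ω * C (H ω))
    (π : (Fin d → ℝ) → ℝ) (hπ : Measurable π)
    (hπcorrect : (fun ω => π (H ω)) =ᵐ[μ] μ[A | MeasurableSpace.comap H inferInstance]) :
    ∀ lam θ : (Fin d → ℝ) → ℝ, Measurable lam → Measurable θ →
      (∃ M, ∀ x, |lam x| ≤ M) → (∃ M, ∀ x, |θ x| ≤ M) →
      ∫ ω, lam (H ω) * (A ω - π (H ω)) * (Y ω - A ω * C (H ω) + θ (H ω)) ∂μ = 0 := by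
  rintro lam θ hlam hθ ⟨Ml, hMl⟩ ⟨Mθ, hMθ⟩
  have hA_bdd : ∀ᵐ ω ∂μ, |A ω| ≤ 1 :=
    ae_of_all μ fun ω => by rcases hA01 ω with h | h <;> simp [h]
  have hAπ_bdd := ae_abs_sub_le_of_ae_eq_condExp hA_bdd hπcorrect
  have hf_bdd : ∀ᵐ ω ∂μ, ‖lam (H ω) * (A ω - π (H ω))‖ ≤ Ml * (1 + 1) :=
    hAπ_bdd.mono fun ω hω => (norm_mul _ _).trans_le <|
      mul_le_mul (hMl _) hω (norm_nonneg _) ((abs_nonneg _).trans (hMl 0))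
  have hφ_int : Integrable (fun ω => lam (H ω) * (ν (H ω) + θ (H ω))) μ :=
    (hνint.add (.of_bound (hθ.comp hH).aestronglyMeasurable Mθ (ae_of_all μ (hMθ <| H ·))))
      |>.bdd_mul (hlam.comp hH).aestronglyMeasurable (ae_of_all μ (hMl <| H ·))
  have outcome :
      ∫ ω, lam (H ω) * (A ω - π (H ω)) * (Y ω - (ν (H ω) + A ω * C (H ω))) ∂μ = 0 :=
    integral_comp_mul_sub_eq_zero_of_ae_eq_condExp_of_bdd_left (Z := fun ω => (H ω, A ω))
      (w := fun x => lam x.1 * (x.2 - π x.1)) (hH.prodMk hA) (by fun_prop) hf_bdd hY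
      hblip.symm
  have treatment : ∫ ω, lam (H ω) * (ν (H ω) + θ (H ω)) * (A ω - π (H ω)) ∂μ = 0 :=
    integral_comp_mul_sub_eq_zero_of_ae_eq_condExp_of_bdd_right
      (w := fun x => lam x * (ν x + θ x)) hH (by fun_prop) hφ_int
      (.of_bound hA.aestronglyMeasurable 1 hA_bdd) hA_bdd hπcorrect
  calc _ = ∫ ω, lam (H ω) * (A ω - π (H ω)) * (Y ω - (ν (H ω) + A ω * C (H ω)))
        + lam (H ω) * (ν (H ω) + θ (H ω)) * (A ω - π (H ω)) ∂μ := by congr 1; ext ω; ring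
    _ = 0 := by
      rw [integral_add, outcome, treatment, add_zero]
      · exact (hY.sub (integrable_condExp.congr hblip)).bdd_mul
          ((hlam.comp hH).mul (hA.sub (hπ.comp hH))).aestronglyMeasurable hf_bdd
      · exact hφ_int.mul_bdd (hA.sub (hπ.comp hH)).aestronglyMeasurable hAπ_bdd

/-- Unbiasedness of the standard G-estimation equation (single stage, correct
propensity model). -/
theorem standard_G_estimation_unbiased
    {Ω : Type*} [MeasurableSpace Ω] (μ : Measure Ω) [IsProbabilityMeasure μ]
    {d : ℕ} (H : Ω → (Fin d → ℝ)) (hH : Measurable H)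
    (A : Ω → ℝ) (hA : Measurable A) (hA01 : ∀ ω, A ω = 0 ∨ A ω = 1)
    (Y : Ω → ℝ) (hY : Integrable Y μ)
    (ν C : (Fin d → ℝ) → ℝ) (hν : Measurable ν) (hC : Measurable C)
    (hνint : Integrable (fun ω => ν (H ω)) μ)
    (hCbdd : ∃ M, ∀ x, |C x| ≤ M)
    (hblip : μ[Y | MeasurableSpace.comap (fun ω => (H ω, A ω)) inferInstance]
      =ᵐ[μ] fun ω => ν (H ω) + A ω * C (H ω))
    (π : (Fin d → ℝ) → ℝ) (hπ : Measurable π)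
    (hπcorrect : (fun ω => π (H ω)) =ᵐ[μ] μ[A | MeasurableSpace.comap H inferInstance]) :
    ∀ lam θ : (Fin d → ℝ) → ℝ, Measurable lam → Measurable θ →
      (∃ M, ∀ x, |lam x| ≤ M) → (∃ M, ∀ x, |θ x| ≤ M) →
      ∫ ω, lam (H ω) * (A ω - π (H ω)) * (Y ω - A ω * C (H ω) + θ (H ω)) ∂μ = 0 :=
  standard_G_estimation_unbiased_general μ H hH A hA hA01 Y hY ν C hν hνint hblip π hπ hπcorrect
end

section
/- Double robustness of standard G-estimation, treatment-free half: Let H : Ω → ℝ^d be measurable, A a treatment indicator, and Y an integrable random variable. Suppose there are Borel functions ν, C : ℝ^d → ℝ with ν(H) integrable, C bounded, and E[Y | σ(H,A)] = ν(H) + A·C(H) μ-a.e. Then for EVERY bounded Borel function p̃ : ℝ^d → ℝ (whether or not it equals the true propensity P(A=1 | σ(H))) and every bounded Borel λ : ℝ^d → ℝ, E[ λ(H)·(A − p̃(H))·(Y − A·C(H) − ν(H)) ] = 0. -/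
/-!
By the blip decomposition, `Y - A·C(H) - ν(H)` is `Y - E[Y | σ(H, A)]`, which is orthogonal to
every bounded `σ(H, A)`-measurable function. The weight `λ(H)·(A - p̃(H))` is such a function
whatever the posited propensity `p̃` is, so the estimating function has mean zero.
-/

open MeasureTheory

section

variable {Ω : Type*} {m m₀ : MeasurableSpace Ω} {μ : Measure Ω}

theorem condExp_sub_condExp_ae_eq_zero (hm : m ≤ m₀) [SigmaFinite (μ.trim hm)] {Y : Ω → ℝ}
    (hY : Integrable Y μ) : μ[Y - μ[Y | m] | m] =ᵐ[μ] 0 := by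
  filter_upwards [condExp_sub hY integrable_condExp m] with ω hω
  rw [hω, condExp_of_stronglyMeasurable hm stronglyMeasurable_condExp integrable_condExp,
    Pi.sub_apply, sub_self, Pi.zero_apply]

theorem integral_mul_sub_condExp_eq_zero (hm : m ≤ m₀) [IsFiniteMeasure μ] {f Y : Ω → ℝ}
    (hf : StronglyMeasurable[m] f) {c : ℝ} (hfc : ∀ᵐ ω ∂μ, ‖f ω‖ ≤ c) (hY : Integrable Y μ) :
    ∫ ω, f ω * (Y ω - μ[Y | m] ω) ∂μ = 0 := by
  calc ∫ ω, f ω * (Y ω - μ[Y | m] ω) ∂μ = ∫ ω, μ[f * (Y - μ[Y | m]) | m] ω ∂μ :=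
        (integral_condExp hm).symm
    _ = ∫ ω, (f * μ[Y - μ[Y | m] | m]) ω ∂μ :=
        integral_congr_ae
          (condExp_stronglyMeasurable_mul_of_bound hm hf (hY.sub integrable_condExp) c hfc)
    _ = ∫ ω, (f * 0 : Ω → ℝ) ω ∂μ :=
        integral_congr_ae (Filter.EventuallyEq.rfl.mul (condExp_sub_condExp_ae_eq_zero hm hY))
    _ = 0 := by simp

theorem integral_mul_sub_eq_zero_of_condExp_ae_eq (hm : m ≤ m₀) [IsFiniteMeasure μ]
    {f Y W : Ω → ℝ} (hf : StronglyMeasurable[m] f) {c : ℝ} (hfc : ∀ᵐ ω ∂μ, ‖f ω‖ ≤ c)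
    (hY : Integrable Y μ) (hW : μ[Y | m] =ᵐ[μ] W) :
    ∫ ω, f ω * (Y ω - W ω) ∂μ = 0 := by
  rw [← integral_mul_sub_condExp_eq_zero hm hf hfc hY]
  refine integral_congr_ae ?_
  filter_upwards [hW] with ω hω
  rw [hω]

end

theorem standard_G_estimation_doubly_robust_treatment_free_general
    {Ω : Type*} [MeasurableSpace Ω] (μ : Measure Ω) [IsProbabilityMeasure μ]
    {d : ℕ} (H : Ω → (Fin d → ℝ)) (hH : Measurable H)
    (A : Ω → ℝ) (hA : Measurable A) (hA01 : ∀ ω, A ω = 0 ∨ A ω = 1)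
    (Y : Ω → ℝ) (hY : Integrable Y μ)
    (ν C : (Fin d → ℝ) → ℝ)
    (hblip : μ[Y | MeasurableSpace.comap (fun ω => (H ω, A ω)) inferInstance]
      =ᵐ[μ] fun ω => ν (H ω) + A ω * C (H ω)) :
    ∀ ptilde lam : (Fin d → ℝ) → ℝ, Measurable ptilde → Measurable lam →
      (∃ M, ∀ x, |ptilde x| ≤ M) → (∃ M, ∀ x, |lam x| ≤ M) →
      ∫ ω, lam (H ω) * (A ω - ptilde (H ω)) * (Y ω - A ω * C (H ω) - ν (H ω)) ∂μ = 0 := by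
  intro ptilde lam hptilde hlam ⟨Mp, hMp⟩ ⟨Ml, hMl⟩
  have hf : StronglyMeasurable[MeasurableSpace.comap (fun ω => (H ω, A ω)) inferInstance]
      (fun ω => lam (H ω) * (A ω - ptilde (H ω))) :=
    (((hlam.comp measurable_fst).mul (measurable_snd.sub (hptilde.comp measurable_fst))).comp
      (comap_measurable _)).stronglyMeasurable
  have hfc : ∀ ω, ‖lam (H ω) * (A ω - ptilde (H ω))‖ ≤ Ml * (1 + Mp) := by
    intro ω
    have hAω : |A ω| ≤ 1 := by rcases hA01 ω with h | h <;> simp [h]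
    rw [Real.norm_eq_abs, abs_mul]
    exact mul_le_mul (hMl _) ((abs_sub _ _).trans (add_le_add hAω (hMp _))) (abs_nonneg _)
      ((abs_nonneg _).trans (hMl (H ω)))
  convert integral_mul_sub_eq_zero_of_condExp_ae_eq (hH.prodMk hA).comap_le hf
    (.of_forall hfc) hY hblip using 3 with ω
  ring

/-- Double robustness of standard G-estimation, treatment-free half: with the
correctly specified treatment-free model `θ(H) = -ν(H)`, the G-estimating
function is unbiased for every posited propensity model `p̃`. -/
theorem standard_G_estimation_doubly_robust_treatment_free
    {Ω : Type*} [MeasurableSpace Ω] (μ : Measure Ω) [IsProbabilityMeasure μ]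
    {d : ℕ} (H : Ω → (Fin d → ℝ)) (hH : Measurable H)
    (A : Ω → ℝ) (hA : Measurable A) (hA01 : ∀ ω, A ω = 0 ∨ A ω = 1)
    (Y : Ω → ℝ) (hY : Integrable Y μ)
    (ν C : (Fin d → ℝ) → ℝ) (hν : Measurable ν) (hC : Measurable C)
    (hνint : Integrable (fun ω => ν (H ω)) μ)
    (hCbdd : ∃ M, ∀ x, |C x| ≤ M)
    (hblip : μ[Y | MeasurableSpace.comap (fun ω => (H ω, A ω)) inferInstance]
      =ᵐ[μ] fun ω => ν (H ω) + A ω * C (H ω)) :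
    ∀ ptilde lam : (Fin d → ℝ) → ℝ, Measurable ptilde → Measurable lam →
      (∃ M, ∀ x, |ptilde x| ≤ M) → (∃ M, ∀ x, |lam x| ≤ M) →
      ∫ ω, lam (H ω) * (A ω - ptilde (H ω)) * (Y ω - A ω * C (H ω) - ν (H ω)) ∂μ = 0 :=
  standard_G_estimation_doubly_robust_treatment_free_general μ H hH A hA hA01 Y hY ν C hblip
end

section
/- Pseudo-outcome value identity for standard G-estimation: Let H : Ω → ℝ^d be measurable, A a treatment indicator, and Y an integrable random variable. Suppose there are Borel functions ν, C : ℝ^d → ℝ with ν(H) integrable, C bounded, and E[Y | σ(H,A)] = ν(H) + A·C(H) μ-a.e. Define the pseudo outcome Ṽ = Y + (𝟙{C(H) > 0} − A)·C(H). Then E[Ṽ | σ(H)] = ν(H) + max(C(H), 0) μ-a.e.; in particular E[Ṽ | σ(H)] equals the value function V(H) = max{Q(H,0), Q(H,1)} where Q(h,a) = ν(h) + a·C(h). -/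
open MeasureTheory

private theorem condexp_add_meas_aux {Ω : Type*} {m0 : MeasurableSpace Ω} {μ : Measure Ω}
    [IsProbabilityMeasure μ]
    {mG mH : MeasurableSpace Ω} (hle1 : mG ≤ mH) (hle2 : mH ≤ m0)
    {Y g t : Ω → ℝ} (hY : Integrable Y μ) (hgint : Integrable g μ)
    (hgmH : StronglyMeasurable[mH] g)
    (htm : StronglyMeasurable[mG] t) (htint : Integrable t μ)
    (hsum : (μ[Y | mH] + g) =ᵐ[μ] t) :
    μ[Y + g | mG] =ᵐ[μ] t := by
  have h1 : μ[Y + g | mH] =ᵐ[μ] t := by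
    have hadd := condExp_add (μ := μ) (m := mH) hY hgint
    have h2 : μ[g | mH] = g := condExp_of_stronglyMeasurable hle2 hgmH hgint
    calc μ[Y + g | mH] =ᵐ[μ] μ[Y | mH] + μ[g | mH] := hadd
      _ = μ[Y | mH] + g := by rw [h2]
      _ =ᵐ[μ] t := hsum
  calc μ[Y + g | mG]
      =ᵐ[μ] μ[μ[Y + g | mH] | mG] := (condExp_condExp_of_le hle1 hle2).symm
    _ =ᵐ[μ] μ[t | mG] := condExp_congr_ae h1
    _ = t := condExp_of_stronglyMeasurable (hle1.trans hle2) htm htint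

/-- Pseudo-outcome value identity for standard G-estimation: the pseudo outcome
`Ṽ = Y + (𝟙{C(H) > 0} - A)·C(H)` satisfies `E[Ṽ | σ(H)] = ν(H) + max(C(H), 0)`,
i.e. `E[Ṽ | σ(H)]` equals the value function `max{Q(H,0), Q(H,1)}` where
`Q(h,a) = ν(h) + a·C(h)`. -/
theorem pseudo_outcome_value_identity
    {Ω : Type*} [MeasurableSpace Ω] (μ : Measure Ω) [IsProbabilityMeasure μ]
    {d : ℕ} (H : Ω → (Fin d → ℝ)) (hH : Measurable H)
    (A : Ω → ℝ) (hA : Measurable A) (hA01 : ∀ ω, A ω = 0 ∨ A ω = 1)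
    (Y : Ω → ℝ) (hY : Integrable Y μ)
    (ν C : (Fin d → ℝ) → ℝ) (hν : Measurable ν) (hC : Measurable C)
    (hνint : Integrable (fun ω => ν (H ω)) μ)
    (hCbdd : ∃ M, ∀ x, |C x| ≤ M)
    (hblip : μ[Y | MeasurableSpace.comap (fun ω => (H ω, A ω)) inferInstance]
      =ᵐ[μ] fun ω => ν (H ω) + A ω * C (H ω)) :
    (μ[fun ω => Y ω + ((if 0 < C (H ω) then (1 : ℝ) else 0) - A ω) * C (H ω) |
        MeasurableSpace.comap H inferInstance]
      =ᵐ[μ] fun ω => ν (H ω) + max (C (H ω)) 0) ∧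
    (μ[fun ω => Y ω + ((if 0 < C (H ω) then (1 : ℝ) else 0) - A ω) * C (H ω) |
        MeasurableSpace.comap H inferInstance]
      =ᵐ[μ] fun ω => max (ν (H ω) + 0 * C (H ω)) (ν (H ω) + 1 * C (H ω))) := by
  obtain ⟨M, hM⟩ := hCbdd
  have hle1 : MeasurableSpace.comap H inferInstance ≤
      MeasurableSpace.comap (fun ω => (H ω, A ω)) inferInstance := by
    intro s hs
    obtain ⟨t, ht, rfl⟩ := hs
    exact ⟨Prod.fst ⁻¹' t, measurable_fst ht, rfl⟩
  have hle2 : MeasurableSpace.comap (fun ω => (H ω, A ω)) inferInstance ≤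
      ‹MeasurableSpace Ω› := (hH.prodMk hA).comap_le
  -- g is mH-measurable
  have hGmeas : Measurable (fun p : (Fin d → ℝ) × ℝ =>
      ((if 0 < C p.1 then (1 : ℝ) else 0) - p.2) * C p.1) := by
    apply Measurable.mul
    · apply Measurable.sub _ measurable_snd
      exact Measurable.ite ((hC.comp measurable_fst) measurableSet_Ioi)
        measurable_const measurable_const
    · exact hC.comp measurable_fst
  have hpairmH : Measurable[MeasurableSpace.comap (fun ω => (H ω, A ω)) inferInstance]
      (fun ω => (H ω, A ω)) := Measurable.of_comap_le le_rfl
  have hgmH : Measurable[MeasurableSpace.comap (fun ω => (H ω, A ω)) inferInstance]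
      (fun ω => ((if 0 < C (H ω) then (1 : ℝ) else 0) - A ω) * C (H ω)) :=
    hGmeas.comp hpairmH
  have hgmeas : Measurable
      (fun ω => ((if 0 < C (H ω) then (1 : ℝ) else 0) - A ω) * C (H ω)) :=
    hgmH.mono hle2 le_rfl
  have hgbound : ∀ ω,
      ‖((if 0 < C (H ω) then (1 : ℝ) else 0) - A ω) * C (H ω)‖ ≤ M := by
    intro ω
    have h1 : |(if 0 < C (H ω) then (1 : ℝ) else 0) - A ω| ≤ 1 := by
      rcases hA01 ω with h | h <;> split <;> simp [h]
    have h2 := hM (H ω)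
    calc ‖((if 0 < C (H ω) then (1 : ℝ) else 0) - A ω) * C (H ω)‖
        = |(if 0 < C (H ω) then (1 : ℝ) else 0) - A ω| * |C (H ω)| := by
          simp [abs_mul, Real.norm_eq_abs]
      _ ≤ 1 * M := mul_le_mul h1 h2 (abs_nonneg _) zero_le_one
      _ = M := one_mul M
  have hgint : Integrable
      (fun ω => ((if 0 < C (H ω) then (1 : ℝ) else 0) - A ω) * C (H ω)) μ := by
    refine (integrable_const M).mono' hgmeas.aestronglyMeasurable ?_
    exact Filter.Eventually.of_forall hgbound
  -- target is mG-measurable and integrable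
  have hHmG : Measurable[MeasurableSpace.comap H inferInstance] H :=
    Measurable.of_comap_le le_rfl
  have htargetMeas : Measurable[MeasurableSpace.comap H inferInstance]
      (fun ω => ν (H ω) + max (C (H ω)) 0) :=
    (hν.add (hC.max measurable_const)).comp hHmG
  have htargetInt : Integrable (fun ω => ν (H ω) + max (C (H ω)) 0) μ := by
    refine hνint.add ?_
    refine (integrable_const M).mono'
      (((hC.max measurable_const).comp hH).aestronglyMeasurable) ?_
    refine Filter.Eventually.of_forall fun ω => ?_
    have := hM (H ω)
    rw [Real.norm_eq_abs]
    rcases le_or_gt (C (H ω)) 0 with h | h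
    · rw [max_eq_right h, abs_zero]; linarith [abs_nonneg (C (H ω))]
    · rw [max_eq_left h.le]; exact this
  -- the sum equality
  have hsum : (μ[Y | MeasurableSpace.comap (fun ω => (H ω, A ω)) inferInstance] +
      fun ω => ((if 0 < C (H ω) then (1 : ℝ) else 0) - A ω) * C (H ω))
      =ᵐ[μ] fun ω => ν (H ω) + max (C (H ω)) 0 := by
    filter_upwards [hblip] with ω hbω
    simp only [Pi.add_apply, hbω]
    rcases le_or_gt (C (H ω)) 0 with h | h
    · rw [if_neg (not_lt.mpr h), max_eq_right h]; ring
    · rw [if_pos h, max_eq_left h.le]; ring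
  have hkey : (fun ω => Y ω +
      ((if 0 < C (H ω) then (1 : ℝ) else 0) - A ω) * C (H ω)) =
      Y + fun ω => ((if 0 < C (H ω) then (1 : ℝ) else 0) - A ω) * C (H ω) := rfl
  have main : μ[fun ω => Y ω +
      ((if 0 < C (H ω) then (1 : ℝ) else 0) - A ω) * C (H ω) |
      MeasurableSpace.comap H inferInstance]
      =ᵐ[μ] fun ω => ν (H ω) + max (C (H ω)) 0 := by
    rw [hkey]
    exact condexp_add_meas_aux hle1 hle2 hY hgint hgmH.stronglyMeasurable
      htargetMeas.stronglyMeasurable htargetInt hsum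
  refine ⟨main, main.trans (Filter.Eventually.of_forall fun ω => ?_)⟩
  show ν (H ω) + max (C (H ω)) 0 =
    max (ν (H ω) + 0 * C (H ω)) (ν (H ω) + 1 * C (H ω))
  rcases le_or_gt (C (H ω)) 0 with h | h
  · rw [max_eq_right h, max_eq_left (by linarith)]; ring
  · rw [max_eq_left h.le, max_eq_right (by linarith)]; ring
end

section
/- Reduction of the outcome regression to observed data under Condition 1 (no predictive information in treatment assignment): Let H : Ω → ℝ^d be the true history, A the true treatment indicator, A* the prescribed treatment indicator, and H* : Ω → ℝ^m the observed history, assumed to satisfy σ(H*) ⊆ σ(H, A*). Let Y be integrable with E[Y | σ(H, A)] = ν(H) + A·C(H) μ-a.e. for Borel ν, C : ℝ^d → ℝ with ν(H) integrable and C bounded. Assume Condition 1: E[Y | σ(H, A, A*)] = E[Y | σ(H, A)] μ-a.e. Then E[Y | σ(H*, A*)] = E[ν(H) | σ(H*, A*)] + E[A·C(H) | σ(H*, A*)] μ-a.e. -/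
/-!
Since `H*` is a function of `(H, A*)`, the observed σ-algebra `σ(H*, A*)` is contained in
`σ(H, A, A*)`. By the tower property, `E[Y | σ(H*, A*)]` may therefore be computed by first
conditioning on `(H, A, A*)`; Condition 1 and the blip decomposition identify that inner
conditional expectation with `ν(H) + A·C(H)`, and linearity of conditional expectation finishes.
-/

open MeasureTheory

lemma MeasurableSpace.comap_prodMk_le_comap_prodMk_prodMk {Ω α β γ δ : Type*}
    [mα : MeasurableSpace α] [mβ : MeasurableSpace β] [mγ : MeasurableSpace γ]
    [mδ : MeasurableSpace δ] {f : Ω → α} {h : Ω → β} {g : Ω → γ} {k : Ω → δ}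
    (hf : mα.comap f ≤ (mβ.prod mδ).comap fun ω => (h ω, k ω)) :
    (mα.prod mδ).comap (fun ω => (f ω, k ω)) ≤
      (mβ.prod (mγ.prod mδ)).comap fun ω => (h ω, g ω, k ω) := by
  rw [comap_prodMk] at hf
  rw [comap_prodMk, comap_prodMk, comap_prodMk]
  exact sup_le (hf.trans (sup_le_sup_left le_sup_right _)) (le_sup_right.trans le_sup_right)

theorem condExp_ae_eq_condExp_add_condExp_of_le {α E : Type*} [NormedAddCommGroup E]
    [NormedSpace ℝ E] [CompleteSpace E] {m₁ m₂ m₀ : MeasurableSpace α} {μ : Measure α}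
    {Y f g : α → E} (hm₁₂ : m₁ ≤ m₂) (hm₂ : m₂ ≤ m₀) [SigmaFinite (μ.trim hm₂)]
    (hf : Integrable f μ) (hg : Integrable g μ) (hY : μ[Y | m₂] =ᵐ[μ] f + g) :
    μ[Y | m₁] =ᵐ[μ] μ[f | m₁] + μ[g | m₁] :=
  calc μ[Y | m₁] =ᵐ[μ] μ[μ[Y | m₂] | m₁] := (condExp_condExp_of_le hm₁₂ hm₂).symm
    _ =ᵐ[μ] μ[f + g | m₁] := condExp_congr_ae hY
    _ =ᵐ[μ] μ[f | m₁] + μ[g | m₁] := condExp_add hf hg m₁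

theorem observed_data_outcome_regression_reduction_general
    {Ω : Type*} [MeasurableSpace Ω] (μ : Measure Ω) [IsProbabilityMeasure μ]
    {d m : ℕ} (H : Ω → (Fin d → ℝ)) (hH : Measurable H)
    (A Astar : Ω → ℝ) (hA : Measurable A) (hAstar : Measurable Astar)
    (hA01 : ∀ ω, A ω = 0 ∨ A ω = 1)
    (Hstar : Ω → (Fin m → ℝ))
    (hHstar_sub : MeasurableSpace.comap Hstar inferInstance ≤
      MeasurableSpace.comap (fun ω => (H ω, Astar ω)) inferInstance)
    (Y : Ω → ℝ)
    (ν C : (Fin d → ℝ) → ℝ) (hC : Measurable C)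
    (hνint : Integrable (fun ω => ν (H ω)) μ)
    (hCbdd : ∃ M, ∀ x, |C x| ≤ M)
    (hblip : μ[Y | MeasurableSpace.comap (fun ω => (H ω, A ω)) inferInstance]
      =ᵐ[μ] fun ω => ν (H ω) + A ω * C (H ω))
    (hcond1 : μ[Y | MeasurableSpace.comap (fun ω => (H ω, A ω, Astar ω)) inferInstance]
      =ᵐ[μ] μ[Y | MeasurableSpace.comap (fun ω => (H ω, A ω)) inferInstance]) :
    μ[Y | MeasurableSpace.comap (fun ω => (Hstar ω, Astar ω)) inferInstance]
      =ᵐ[μ] fun ω =>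
        (μ[fun ω' => ν (H ω') |
            MeasurableSpace.comap (fun ω' => (Hstar ω', Astar ω')) inferInstance]) ω
        + (μ[fun ω' => A ω' * C (H ω') |
            MeasurableSpace.comap (fun ω' => (Hstar ω', Astar ω')) inferInstance]) ω := by
  obtain ⟨M, hM⟩ := hCbdd
  have hCH_int : Integrable (fun ω => C (H ω)) μ :=
    .of_bound (hC.comp hH).aestronglyMeasurable M (ae_of_all _ fun ω => hM (H ω))
  have hACH_int : Integrable (fun ω => A ω * C (H ω)) μ :=
    hCH_int.bdd_mul (c := 1) hA.aestronglyMeasurable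
      (ae_of_all _ fun ω => by rcases hA01 ω with h | h <;> simp [h])
  exact condExp_ae_eq_condExp_add_condExp_of_le
    (MeasurableSpace.comap_prodMk_le_comap_prodMk_prodMk hHstar_sub)
    (hH.prodMk (hA.prodMk hAstar)).comap_le hνint hACH_int (hcond1.trans hblip)

/-- Reduction of the outcome regression to observed data under Condition 1 (no
predictive information in treatment assignment given the true history and true
treatment). -/
theorem observed_data_outcome_regression_reduction
    {Ω : Type*} [MeasurableSpace Ω] (μ : Measure Ω) [IsProbabilityMeasure μ]
    {d m : ℕ} (H : Ω → (Fin d → ℝ)) (hH : Measurable H)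
    (A Astar : Ω → ℝ) (hA : Measurable A) (hAstar : Measurable Astar)
    (hA01 : ∀ ω, A ω = 0 ∨ A ω = 1) (hAstar01 : ∀ ω, Astar ω = 0 ∨ Astar ω = 1)
    (Hstar : Ω → (Fin m → ℝ)) (hHstar : Measurable Hstar)
    (hHstar_sub : MeasurableSpace.comap Hstar inferInstance ≤
      MeasurableSpace.comap (fun ω => (H ω, Astar ω)) inferInstance)
    (Y : Ω → ℝ) (hY : Integrable Y μ)
    (ν C : (Fin d → ℝ) → ℝ) (hν : Measurable ν) (hC : Measurable C)
    (hνint : Integrable (fun ω => ν (H ω)) μ)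
    (hCbdd : ∃ M, ∀ x, |C x| ≤ M)
    (hblip : μ[Y | MeasurableSpace.comap (fun ω => (H ω, A ω)) inferInstance]
      =ᵐ[μ] fun ω => ν (H ω) + A ω * C (H ω))
    (hcond1 : μ[Y | MeasurableSpace.comap (fun ω => (H ω, A ω, Astar ω)) inferInstance]
      =ᵐ[μ] μ[Y | MeasurableSpace.comap (fun ω => (H ω, A ω)) inferInstance]) :
    μ[Y | MeasurableSpace.comap (fun ω => (Hstar ω, Astar ω)) inferInstance]
      =ᵐ[μ] fun ω =>
        (μ[fun ω' => ν (H ω') |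
            MeasurableSpace.comap (fun ω' => (Hstar ω', Astar ω')) inferInstance]) ω
        + (μ[fun ω' => A ω' * C (H ω') |
            MeasurableSpace.comap (fun ω' => (Hstar ω', Astar ω')) inferInstance]) ω :=
  observed_data_outcome_regression_reduction_general μ H hH A Astar hA hAstar hA01 Hstar hHstar_sub
    Y ν C hC hνint hCbdd hblip hcond1
end

section
/- Final-stage observed-data decomposition under Conditions 1–3 (base case of the consistency proof): Let H : Ω → ℝ^d be the true history, A the true treatment indicator, A* the prescribed treatment indicator, and H* : Ω → ℝ^m the observed history with σ(H*) ⊆ σ(H, A*). Let Y be integrable with E[Y | σ(H, A)] = ν(H) + A·C(H) μ-a.e. for Borel ν, C : ℝ^d → ℝ with ν(H) integrable and C bounded. Assume: Condition 1, E[Y | σ(H, A, A*)] = E[Y | σ(H, A)] μ-a.e.; Condition 2, E[ν(H) | σ(H*, A*)] = E[ν(H) | σ(H*)] μ-a.e.; and Condition 3 (conditional mean independence of the contrast from the true treatment), E[A·C(H) | σ(H*, A*)] = E[A | σ(H*, A*)]·E[C(H) | σ(H*, A*)] μ-a.e. Then E[Y | σ(H*, A*)] = E[ν(H) | σ(H*)]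 + E[A | σ(H*, A*)]·E[C(H) | σ(H*, A*)] μ-a.e.; that is, E[Y | σ(H*, A*)] = ν*(H*) + π*(H*, A*)·C*(H*) with ν* = E[ν(H) | σ(H*)], π* = P(A = 1 | σ(H*, A*)) and C* = E[C(H) | σ(H*, A*)]. -/
open MeasureTheory

/-!
Condition 1 and the blip model give `E[Y | H, A, A*] = ν(H) + A·C(H)`. Since `σ(H*, A*)` is
coarser than `σ(H, A, A*)`, the tower property and linearity give
`E[Y | H*, A*] = E[ν(H) | H*, A*] + E[A·C(H) | H*, A*]`, and Conditions 2 and 3 rewrite the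
two terms.
-/

theorem condExp_eq_condExp_add_condExp_of_condExp_eq_add {Ω : Type*}
    {m m' m₀ : MeasurableSpace Ω} {μ : Measure Ω} (hm : m ≤ m') (hm' : m' ≤ m₀)
    [SigmaFinite (μ.trim hm')] {Y f g : Ω → ℝ} (hf : Integrable f μ)
    (hY : μ[Y | m'] =ᵐ[μ] f + g) :
    μ[Y | m] =ᵐ[μ] μ[f | m] + μ[g | m] := by
  -- `g` is a conditional expectation minus an integrable function
  have hg : Integrable g μ :=
    ((integrable_condExp (m := m') (f := Y)).sub hf).congr
      (by filter_upwards [hY] with ω hω; simp [hω])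
  calc μ[Y | m] =ᵐ[μ] μ[μ[Y | m'] | m] := (condExp_condExp_of_le hm hm').symm
    _ =ᵐ[μ] μ[f + g | m] := condExp_congr_ae hY
    _ =ᵐ[μ] μ[f | m] + μ[g | m] := condExp_add hf hg m

theorem final_stage_observed_data_decomposition_general
    {Ω : Type*} [MeasurableSpace Ω] (μ : Measure Ω) [IsProbabilityMeasure μ]
    {d m : ℕ} (H : Ω → (Fin d → ℝ)) (hH : Measurable H)
    (A Astar : Ω → ℝ) (hA : Measurable A) (hAstar : Measurable Astar)
    (Hstar : Ω → (Fin m → ℝ))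
    (hHstar_sub : MeasurableSpace.comap Hstar inferInstance ≤
      MeasurableSpace.comap (fun ω => (H ω, Astar ω)) inferInstance)
    (Y : Ω → ℝ)
    (ν C : (Fin d → ℝ) → ℝ)
    (hνint : Integrable (fun ω => ν (H ω)) μ)
    (hblip : μ[Y | MeasurableSpace.comap (fun ω => (H ω, A ω)) inferInstance]
      =ᵐ[μ] fun ω => ν (H ω) + A ω * C (H ω))
    (hcond1 : μ[Y | MeasurableSpace.comap (fun ω => (H ω, A ω, Astar ω)) inferInstance]
      =ᵐ[μ] μ[Y | MeasurableSpace.comap (fun ω => (H ω, A ω)) inferInstance])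
    (hcond2 : μ[fun ω => ν (H ω) |
          MeasurableSpace.comap (fun ω => (Hstar ω, Astar ω)) inferInstance]
      =ᵐ[μ] μ[fun ω => ν (H ω) | MeasurableSpace.comap Hstar inferInstance])
    (hcond3 : μ[fun ω => A ω * C (H ω) |
          MeasurableSpace.comap (fun ω => (Hstar ω, Astar ω)) inferInstance]
      =ᵐ[μ] fun ω =>
        (μ[A | MeasurableSpace.comap (fun ω' => (Hstar ω', Astar ω')) inferInstance]) ω
        * (μ[fun ω' => C (H ω') |
            MeasurableSpace.comap (fun ω' => (Hstar ω', Astar ω')) inferInstance]) ω) :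
    μ[Y | MeasurableSpace.comap (fun ω => (Hstar ω, Astar ω)) inferInstance]
      =ᵐ[μ] fun ω =>
        (μ[fun ω' => ν (H ω') | MeasurableSpace.comap Hstar inferInstance]) ω
        + (μ[A | MeasurableSpace.comap (fun ω' => (Hstar ω', Astar ω')) inferInstance]) ω
        * (μ[fun ω' => C (H ω') |
            MeasurableSpace.comap (fun ω' => (Hstar ω', Astar ω')) inferInstance]) ω := by
  have h_observed_le_full :
      MeasurableSpace.comap (fun ω => (Hstar ω, Astar ω)) inferInstance ≤
        MeasurableSpace.comap (fun ω => (H ω, A ω, Astar ω)) inferInstance := by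
    simp only [inferInstance, Prod.instMeasurableSpace, MeasurableSpace.comap_prodMk]
      at hHstar_sub ⊢
    exact sup_le (hHstar_sub.trans (sup_le_sup_left le_sup_right _))
      (le_sup_right.trans le_sup_right)
  have h_full_le :
      MeasurableSpace.comap (fun ω => (H ω, A ω, Astar ω)) inferInstance ≤ ‹_› :=
    (hH.prodMk (hA.prodMk hAstar)).comap_le
  filter_upwards [condExp_eq_condExp_add_condExp_of_condExp_eq_add h_observed_le_full h_full_le
    hνint (hcond1.trans hblip), hcond2, hcond3] with ω hω hν hAC
  rw [hω, Pi.add_apply, hν, hAC]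

/-- Final-stage observed-data decomposition under Conditions 1–3:
`E[Y | σ(H*, A*)] = ν*(H*) + π*(H*, A*)·C*(H*)` with `ν* = E[ν(H) | σ(H*)]`,
`π* = P(A = 1 | σ(H*, A*)) = E[A | σ(H*, A*)]` and `C* = E[C(H) | σ(H*, A*)]`. -/
theorem final_stage_observed_data_decomposition
    {Ω : Type*} [MeasurableSpace Ω] (μ : Measure Ω) [IsProbabilityMeasure μ]
    {d m : ℕ} (H : Ω → (Fin d → ℝ)) (hH : Measurable H)
    (A Astar : Ω → ℝ) (hA : Measurable A) (hAstar : Measurable Astar)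
    (hA01 : ∀ ω, A ω = 0 ∨ A ω = 1) (hAstar01 : ∀ ω, Astar ω = 0 ∨ Astar ω = 1)
    (Hstar : Ω → (Fin m → ℝ)) (hHstar : Measurable Hstar)
    (hHstar_sub : MeasurableSpace.comap Hstar inferInstance ≤
      MeasurableSpace.comap (fun ω => (H ω, Astar ω)) inferInstance)
    (Y : Ω → ℝ) (hY : Integrable Y μ)
    (ν C : (Fin d → ℝ) → ℝ) (hν : Measurable ν) (hC : Measurable C)
    (hνint : Integrable (fun ω => ν (H ω)) μ)
    (hCbdd : ∃ M, ∀ x, |C x| ≤ M)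
    (hblip : μ[Y | MeasurableSpace.comap (fun ω => (H ω, A ω)) inferInstance]
      =ᵐ[μ] fun ω => ν (H ω) + A ω * C (H ω))
    (hcond1 : μ[Y | MeasurableSpace.comap (fun ω => (H ω, A ω, Astar ω)) inferInstance]
      =ᵐ[μ] μ[Y | MeasurableSpace.comap (fun ω => (H ω, A ω)) inferInstance])
    (hcond2 : μ[fun ω => ν (H ω) |
          MeasurableSpace.comap (fun ω => (Hstar ω, Astar ω)) inferInstance]
      =ᵐ[μ] μ[fun ω => ν (H ω) | MeasurableSpace.comap Hstar inferInstance])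
    (hcond3 : μ[fun ω => A ω * C (H ω) |
          MeasurableSpace.comap (fun ω => (Hstar ω, Astar ω)) inferInstance]
      =ᵐ[μ] fun ω =>
        (μ[A | MeasurableSpace.comap (fun ω' => (Hstar ω', Astar ω')) inferInstance]) ω
        * (μ[fun ω' => C (H ω') |
            MeasurableSpace.comap (fun ω' => (Hstar ω', Astar ω')) inferInstance]) ω) :
    μ[Y | MeasurableSpace.comap (fun ω => (Hstar ω, Astar ω)) inferInstance]
      =ᵐ[μ] fun ω =>
        (μ[fun ω' => ν (H ω') | MeasurableSpace.comap Hstar inferInstance]) ω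
        + (μ[A | MeasurableSpace.comap (fun ω' => (Hstar ω', Astar ω')) inferInstance]) ω
        * (μ[fun ω' => C (H ω') |
            MeasurableSpace.comap (fun ω' => (Hstar ω', Astar ω')) inferInstance]) ω :=
  final_stage_observed_data_decomposition_general μ H hH A Astar hA hAstar Hstar hHstar_sub Y ν C
    hνint hblip hcond1 hcond2 hcond3
end

section
/- Unbiasedness of the modified G-estimating equation when the treatment-assignment model is correct: Let H* : Ω → ℝ^m be measurable, A* a treatment indicator, and Y integrable. Suppose there are a Borel function ν* : ℝ^m → ℝ with ν*(H*) integrable, a bounded Borel function C* : ℝ^m → ℝ, and a bounded σ(H*, A*)-measurable random variable Π such that E[Y | σ(H*, A*)] = ν*(H*) + Π·C*(H*) μ-a.e. Let p : ℝ^m → ℝ be Borel with p(H*) = E[A* | σ(H*)] μ-a.e. Then for all bounded Borel functions λ, θ : ℝ^m → ℝ, E[ λ(H*)·(A* − p(H*))·(Y − Π·C*(H*) + θ(H*)) ] = 0. -/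
/-!
Conditioning on `σ(H*, A*)`, the factor `λ(H*) (A* - p(H*))` can be pulled out and `Y` replaced
by its regression `ν*(H*) + Π C*(H*)`; the blip term `Π C*(H*)` then cancels, leaving
`E[λ(H*) (ν* + θ)(H*) (A* - p(H*))]`. Conditioning next on `σ(H*)`, the factor `λ (ν* + θ)(H*)`
is pulled out again and `A* - p(H*)` has conditional mean zero because the propensity model is
correct.
-/

open MeasureTheory

section CondExp

variable {Ω : Type*} {m m₀ : MeasurableSpace Ω} {μ : Measure Ω}

theorem condExp_add_of_stronglyMeasurable (hm : m ≤ m₀) [SigmaFinite (μ.trim hm)]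
    {X W : Ω → ℝ} (hX : Integrable X μ) (hW : StronglyMeasurable[m] W) (hWi : Integrable W μ) :
    μ[X + W | m] =ᵐ[μ] μ[X | m] + W := by
  simpa only [condExp_of_stronglyMeasurable hm hW hWi] using condExp_add hX hWi m

theorem integral_mul_eq_of_condExp_ae_eq (hm : m ≤ m₀) [SigmaFinite (μ.trim hm)]
    {g X Z : Ω → ℝ} (hg : AEStronglyMeasurable[m] g μ) (hgX : Integrable (g * X) μ)
    (hX : Integrable X μ) (hXZ : μ[X | m] =ᵐ[μ] Z) :
    ∫ ω, g ω * X ω ∂μ = ∫ ω, g ω * Z ω ∂μ :=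
  calc ∫ ω, g ω * X ω ∂μ = ∫ ω, μ[g * X | m] ω ∂μ := (integral_condExp hm).symm
    _ = ∫ ω, g ω * μ[X | m] ω ∂μ :=
      integral_congr_ae (condExp_mul_of_aestronglyMeasurable_left hg hgX hX)
    _ = ∫ ω, g ω * Z ω ∂μ := integral_congr_ae (hXZ.mono fun ω h => by simp only [h])

theorem integral_mul_add_eq_of_condExp_ae_eq (hm : m ≤ m₀) [SigmaFinite (μ.trim hm)]
    {g Y V W : Ω → ℝ} {c : ℝ} (hg : AEStronglyMeasurable[m] g μ) (hgc : ∀ᵐ ω ∂μ, ‖g ω‖ ≤ c)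
    (hY : Integrable Y μ) (hW : StronglyMeasurable[m] W) (hWi : Integrable W μ)
    (hYV : μ[Y | m] =ᵐ[μ] V) :
    ∫ ω, g ω * (Y ω + W ω) ∂μ = ∫ ω, g ω * (V ω + W ω) ∂μ := by
  refine integral_mul_eq_of_condExp_ae_eq (X := Y + W) (Z := V + W) hm hg
    ((hY.add hWi).bdd_mul (hg.mono hm) hgc) (hY.add hWi) ?_
  filter_upwards [condExp_add_of_stronglyMeasurable hm hY hW hWi, hYV] with ω h h'
  simp only [h, h', _root_.Pi.add_apply]

theorem ae_abs_sub_le_of_ae_eq_condExp_s6 {A q : Ω → ℝ} {M : ℝ} (hA : ∀ᵐ ω ∂μ, |A ω| ≤ M)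
    (hq : q =ᵐ[μ] μ[A | m]) : ∀ᵐ ω ∂μ, |A ω - q ω| ≤ 2 * M := by
  filter_upwards [hA, hq, ae_bdd_abs_condExp_of_ae_bdd_abs (m := m) hA] with ω hAω hqω hcω
  rw [hqω]
  linarith [abs_sub (A ω) (μ[A | m] ω)]

theorem integral_mul_sub_eq_zero_of_ae_eq_condExp_s6 (hm : m ≤ m₀) [SigmaFinite (μ.trim hm)]
    {g A q : Ω → ℝ} (hg : AEStronglyMeasurable[m] g μ) (hgAq : Integrable (g * (A - q)) μ)
    (hA : Integrable A μ) (hq : StronglyMeasurable[m] q) (hqA : q =ᵐ[μ] μ[A | m]) :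
    ∫ ω, g ω * (A ω - q ω) ∂μ = 0 := by
  have hqi : Integrable q μ := integrable_condExp.congr hqA.symm
  have hres : μ[A - q | m] =ᵐ[μ] 0 := by
    rw [sub_eq_add_neg]
    filter_upwards [condExp_add_of_stronglyMeasurable hm hA hq.neg hqi.neg, hqA] with ω h h'
    simp [h, ← h']
  simpa using integral_mul_eq_of_condExp_ae_eq hm hg hgAq (hA.sub hqi) hres

end CondExp

theorem integral_comp_mul_sub_eq_zero_of_ae_eq_condExp {Ω α : Type*} {mΩ : MeasurableSpace Ω}
    [MeasurableSpace α] {μ : Measure Ω} [IsFiniteMeasure μ] {H : Ω → α} (hH : Measurable H)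
    {A : Ω → ℝ} (hA : Measurable A) {M : ℝ} (hAM : ∀ ω, |A ω| ≤ M) {f p : α → ℝ}
    (hf : Measurable f) (hfi : Integrable (fun ω => f (H ω)) μ) (hp : Measurable p)
    (hpA : (fun ω => p (H ω)) =ᵐ[μ] μ[A | MeasurableSpace.comap H inferInstance]) :
    ∫ ω, f (H ω) * (A ω - p (H ω)) ∂μ = 0 := by
  have hHσ : Measurable[MeasurableSpace.comap H inferInstance] H := comap_measurable H
  refine integral_mul_sub_eq_zero_of_ae_eq_condExp_s6 hH.comap_le (hf.comp hHσ).aestronglyMeasurable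
    ?_ (.of_bound hA.aestronglyMeasurable M (.of_forall hAM)) (hp.comp hHσ).stronglyMeasurable hpA
  exact hfi.mul_bdd (hA.sub (hp.comp hH)).aestronglyMeasurable
    (ae_abs_sub_le_of_ae_eq_condExp_s6 (.of_forall hAM) hpA)

/-- Unbiasedness of the modified G-estimating equation when the
treatment-assignment model `p(H*) = P(A* = 1 | σ(H*))` is correct. -/
theorem modified_G_estimation_unbiased
    {Ω : Type*} [MeasurableSpace Ω] (μ : Measure Ω) [IsProbabilityMeasure μ]
    {m : ℕ} (Hstar : Ω → (Fin m → ℝ)) (hHstar : Measurable Hstar)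
    (Astar : Ω → ℝ) (hAstar : Measurable Astar)
    (hAstar01 : ∀ ω, Astar ω = 0 ∨ Astar ω = 1)
    (Y : Ω → ℝ) (hY : Integrable Y μ)
    (νstar Cstar : (Fin m → ℝ) → ℝ) (hνstar : Measurable νstar) (hCstar : Measurable Cstar)
    (hνstarint : Integrable (fun ω => νstar (Hstar ω)) μ)
    (hCstarbdd : ∃ M, ∀ x, |Cstar x| ≤ M)
    (Pi : Ω → ℝ)
    (hPi : Measurable[MeasurableSpace.comap (fun ω => (Hstar ω, Astar ω)) inferInstance] Pi)
    (hPibdd : ∃ M, ∀ ω, |Pi ω| ≤ M)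
    (hblip : μ[Y | MeasurableSpace.comap (fun ω => (Hstar ω, Astar ω)) inferInstance]
      =ᵐ[μ] fun ω => νstar (Hstar ω) + Pi ω * Cstar (Hstar ω))
    (p : (Fin m → ℝ) → ℝ) (hp : Measurable p)
    (hpcorrect : (fun ω => p (Hstar ω))
      =ᵐ[μ] μ[Astar | MeasurableSpace.comap Hstar inferInstance]) :
    ∀ lam θ : (Fin m → ℝ) → ℝ, Measurable lam → Measurable θ →
      (∃ M, ∀ x, |lam x| ≤ M) → (∃ M, ∀ x, |θ x| ≤ M) →
      ∫ ω, lam (Hstar ω) * (Astar ω - p (Hstar ω))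
          * (Y ω - Pi ω * Cstar (Hstar ω) + θ (Hstar ω)) ∂μ = 0 := by
  rintro lam θ hlam hθ ⟨Ml, hMl⟩ ⟨Mθ, hMθ⟩
  obtain ⟨MC, hMC⟩ := hCstarbdd
  obtain ⟨MP, hMP⟩ := hPibdd
  set G : MeasurableSpace Ω := MeasurableSpace.comap (fun ω => (Hstar ω, Astar ω)) inferInstance
  have hG : G ≤ _ := (hHstar.prodMk hAstar).comap_le
  have hHG : Measurable[G] Hstar := measurable_fst.comp (comap_measurable _)
  have hAG : Measurable[G] Astar := measurable_snd.comp (comap_measurable _)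
  have hA : ∀ ω, |Astar ω| ≤ 1 := fun ω => by rcases hAstar01 ω with h | h <;> simp [h]
  have hθint : Integrable (fun ω => θ (Hstar ω)) μ :=
    .of_bound (hθ.comp hHstar).aestronglyMeasurable Mθ (.of_forall fun ω => hMθ (Hstar ω))
  have hCint : Integrable (fun ω => Cstar (Hstar ω)) μ :=
    .of_bound (hCstar.comp hHstar).aestronglyMeasurable MC (.of_forall fun ω => hMC (Hstar ω))
  set g : Ω → ℝ := fun ω => lam (Hstar ω) * (Astar ω - p (Hstar ω))
  have hgG : Measurable[G] g := (hlam.comp hHG).mul (hAG.sub (hp.comp hHG))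
  have hg : ∀ᵐ ω ∂μ, ‖g ω‖ ≤ Ml * 2 := by
    filter_upwards [ae_abs_sub_le_of_ae_eq_condExp_s6 (.of_forall hA) hpcorrect] with ω h
    rw [Real.norm_eq_abs, abs_mul]
    exact mul_le_mul (hMl _) (h.trans_eq (mul_one 2)) (abs_nonneg _)
      ((abs_nonneg _).trans (hMl (Hstar ω)))
  set W : Ω → ℝ := fun ω => θ (Hstar ω) - Pi ω * Cstar (Hstar ω)
  have hWG : Measurable[G] W := (hθ.comp hHG).sub (hPi.mul (hCstar.comp hHG))
  have hW : Integrable W μ :=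
    hθint.sub (hCint.bdd_mul (hPi.stronglyMeasurable.mono hG).aestronglyMeasurable (.of_forall hMP))
  calc _ = ∫ ω, g ω * (Y ω + W ω) ∂μ :=
        integral_congr_ae (.of_forall fun ω => by simp only [g, W]; ring)
    _ = ∫ ω, g ω * (νstar (Hstar ω) + Pi ω * Cstar (Hstar ω) + W ω) ∂μ :=
      integral_mul_add_eq_of_condExp_ae_eq hG hgG.aestronglyMeasurable hg hY
        hWG.stronglyMeasurable hW hblip
    _ = ∫ ω, (lam (Hstar ω) * (νstar (Hstar ω) + θ (Hstar ω))) * (Astar ω - p (Hstar ω)) ∂μ :=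
      integral_congr_ae (.of_forall fun ω => by simp only [g, W]; ring)
    _ = 0 := integral_comp_mul_sub_eq_zero_of_ae_eq_condExp (f := fun x => lam x * (νstar x + θ x))
      hHstar hAstar hA (hlam.mul (hνstar.add hθ))
      ((hνstarint.add hθint).bdd_mul (hlam.comp hHstar).aestronglyMeasurable
        (.of_forall fun ω => hMl (Hstar ω))) hp hpcorrect
end

section
/- Expected optimal-contrast term when the contrast tailors on a past true treatment (equation (3) of the paper): Let 𝓖 ⊆ 𝓕 be a sub-σ-algebra, X : Ω → ℝ^m a 𝓖-measurable random vector (the observed history H_j*), B a treatment indicator (the true past treatment A_{j-1}), and c : ℝ^m × ℝ → ℝ a bounded Borel function with C := c(X, B) the contrast value and A^opt := 𝟙{C > 0} the optimal treatment indicator. Let π be a version of E[B | 𝓖]. Then E[ A^opt·C | 𝓖 ] = π·𝟙{c(X,1) > 0}·c(X,1) + (1 − π)·𝟙{c(X,0) > 0}·c(X,0) μ-a.e. -/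
open MeasureTheory

/-- Expected optimal-contrast term when the contrast tailors on a past true
treatment (equation (3) of the paper):
`E[A^opt·C | 𝓖] = π·𝟙{c(X,1)>0}·c(X,1) + (1−π)·𝟙{c(X,0)>0}·c(X,0)` where
`C = c(X, B)`, `A^opt = 𝟙{C > 0}` and `π` is a version of `E[B | 𝓖]`. -/
theorem expected_optimal_contrast_past_treatment
    {Ω : Type*} (𝓖 : MeasurableSpace Ω) {mΩ : MeasurableSpace Ω} (μ : Measure Ω) [IsProbabilityMeasure μ]
    (h𝓖 : 𝓖 ≤ mΩ)
    {m : ℕ} (X : Ω → (Fin m → ℝ)) (hX : Measurable[𝓖] X)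
    (B : Ω → ℝ) (hB : Measurable B) (hB01 : ∀ ω, B ω = 0 ∨ B ω = 1)
    (c : (Fin m → ℝ) → ℝ → ℝ)
    (hc : Measurable (fun q : (Fin m → ℝ) × ℝ => c q.1 q.2))
    (hcbdd : ∃ M, ∀ x a, |c x a| ≤ M)
    (π : Ω → ℝ) (hπmeas : Measurable[𝓖] π) (hπver : π =ᵐ[μ] μ[B | 𝓖]) :
    μ[fun ω => (if 0 < c (X ω) (B ω) then (1 : ℝ) else 0) * c (X ω) (B ω) | 𝓖]
      =ᵐ[μ] fun ω =>
        π ω * (if 0 < c (X ω) 1 then (1 : ℝ) else 0) * c (X ω) 1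
        + (1 - π ω) * (if 0 < c (X ω) 0 then (1 : ℝ) else 0) * c (X ω) 0 := by
  obtain ⟨M, hM⟩ := hcbdd
  have hBm : Measurable[mΩ] B := hB
  have hM0 : (0 : ℝ) ≤ M := le_trans (abs_nonneg _) (hM (fun _ => 0) 0)
  set one : Ω → ℝ := fun _ => 1 with honedef
  set g1 : Ω → ℝ := fun ω => (if 0 < c (X ω) 1 then (1 : ℝ) else 0) * c (X ω) 1 with hg1def
  set g0 : Ω → ℝ := fun ω => (if 0 < c (X ω) 0 then (1 : ℝ) else 0) * c (X ω) 0 with hg0def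
  have hcb : ∀ b : ℝ, Measurable fun x => c x b := fun b =>
    hc.comp (measurable_id.prodMk measurable_const)
  have hgmeas : ∀ b : ℝ,
      Measurable fun x : Fin m → ℝ => (if 0 < c x b then (1 : ℝ) else 0) * c x b := fun b =>
    (Measurable.ite (measurableSet_lt measurable_const (hcb b)) measurable_const
      measurable_const).mul (hcb b)
  have hg1G : Measurable[𝓖] g1 := (hgmeas 1).comp hX
  have hg0G : Measurable[𝓖] g0 := (hgmeas 0).comp hX
  have hg1m : Measurable[mΩ] g1 := hg1G.mono h𝓖 le_rfl
  have hg0m : Measurable[mΩ] g0 := hg0G.mono h𝓖 le_rfl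
  have hgbd : ∀ (b : ℝ) x, |(if 0 < c x b then (1 : ℝ) else 0) * c x b| ≤ M := by
    intro b x
    by_cases h : 0 < c x b <;> simp [h, hM, hM0]
  have hBbd : ∀ ω, |B ω| ≤ 1 := by intro ω; rcases hB01 ω with h | h <;> simp [h]
  have hintb : ∀ (f : Ω → ℝ) (K : ℝ), Measurable[mΩ] f → (∀ ω, |f ω| ≤ K) → Integrable f μ := by
    intro f K hf hK
    exact (integrable_const K).mono' (hf.aestronglyMeasurable (μ := μ))
      (Filter.Eventually.of_forall fun ω => by simpa using hK ω)
  have hintB : Integrable B μ := hintb B 1 hBm hBbd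
  have hint1 : Integrable (g1 * B) μ := by
    refine hintb _ (M * 1) (hg1m.mul hBm) fun ω => ?_
    rw [Pi.mul_apply, abs_mul]
    exact mul_le_mul (hgbd 1 (X ω)) (hBbd ω) (abs_nonneg _) hM0
  have hintB' : Integrable (one - B) μ := (integrable_const 1).sub hintB
  have hint0 : Integrable (g0 * (one - B)) μ := by
    refine hintb _ (M * 2) (hg0m.mul (measurable_const.sub hBm)) fun ω => ?_
    rw [Pi.mul_apply, abs_mul]
    have h2 : |(one - B) ω| ≤ 2 := by
      rcases hB01 ω with h | h <;> simp [honedef, h] <;> norm_num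
    exact mul_le_mul (hgbd 0 (X ω)) h2 (abs_nonneg _) hM0
  have hfun : (fun ω => (if 0 < c (X ω) (B ω) then (1 : ℝ) else 0) * c (X ω) (B ω))
      = g1 * B + g0 * (one - B) := by
    funext ω
    rcases hB01 ω with h | h <;> simp [hg1def, hg0def, honedef, h]
  have hadd := condExp_add (μ := μ) (m := 𝓖) hint1 hint0
  have h1 := condExp_mul_of_stronglyMeasurable_left hg1G.stronglyMeasurable hint1 hintB
  have h0 := condExp_mul_of_stronglyMeasurable_left hg0G.stronglyMeasurable hint0 hintB'
  have hsub : μ[one - B|𝓖] =ᵐ[μ] one - μ[B|𝓖] := by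
    refine (condExp_sub (integrable_const 1) hintB 𝓖).trans ?_
    rw [honedef, condExp_const h𝓖]
  rw [hfun]
  refine hadd.trans ?_
  filter_upwards [h1, h0, hsub, hπver] with ω e1 e0 es eπ
  simp only [Pi.add_apply, Pi.mul_apply, Pi.sub_apply, honedef] at e1 e0 es ⊢
  rw [e1, e0, es, ← eπ]
  simp only [hg1def, hg0def]
  ring
end

section
/- Observed-data decomposition with multiple treatment alternatives: Let H : Ω → ℝ^d be the true history, 𝒜 ⊆ ℝ a finite set containing 0, A : Ω → 𝒜 the true treatment, A* : Ω → 𝒜 the prescribed treatment, and H* : Ω → ℝ^m the observed history with σ(H*) ⊆ σ(H, A*). Let Y be integrable with E[Y | σ(H, A)] = ν(H) + Σ_{a ∈ 𝒜, a ≠ 0} 𝟙{A = a}·C_a(H) μ-a.e., where ν(H) is integrable and each C_a is a bounded Borel function. Assume Condition 1: E[Y | σ(H, A, A*)] = E[Y | σ(H, A)] μ-a.e., and, for each a ∈ 𝒜 with a ≠ 0, the Condition-3 analogue E[𝟙{A = a}·C_a(H) | σ(H*, A*)] = E[𝟙{A = a} | σ(H*, A*)]·E[C_a(H) | σ(H*,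 A*)] μ-a.e. Then E[Y | σ(H*, A*)] = E[ν(H) | σ(H*, A*)] + Σ_{a ∈ 𝒜, a ≠ 0} E[𝟙{A = a} | σ(H*, A*)]·E[C_a(H) | σ(H*, A*)] μ-a.e. -/
/-!
Condition 1 and the tower property (σ(H*, A*) ⊆ σ(H, A, A*), because H* is a function of
(H, A*)) give E[Y | σ(H*, A*)] = E[E[Y | σ(H, A)] | σ(H*, A*)]. Substituting the blip
decomposition of E[Y | σ(H, A)] and using linearity of conditional expectation, each term
𝟙{A = a}·C_a(H) (integrable since C_a is bounded) is then factorized by the Condition-3 analogue.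
-/

open MeasureTheory

section ConditionalExpectation

variable {Ω ι : Type*} {m₀ : MeasurableSpace Ω} {μ : Measure Ω}

theorem condExp_ae_eq_condExp_condExp_of_condExp_ae_eq {m₁ m₂ m : MeasurableSpace Ω}
    (hm : m ≤ m₂) (hm₂ : m₂ ≤ m₀) [SigmaFinite (μ.trim hm₂)] {Y : Ω → ℝ}
    (h : μ[Y | m₂] =ᵐ[μ] μ[Y | m₁]) :
    μ[Y | m] =ᵐ[μ] μ[μ[Y | m₁] | m] :=
  (condExp_condExp_of_le hm hm₂).symm.trans (condExp_congr_ae h)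

theorem condExp_add_sum_ae_eq_of_factorization (m : MeasurableSpace Ω) {f : Ω → ℝ}
    {s : Finset ι} {g p q : ι → Ω → ℝ} (hf : Integrable f μ)
    (hg : ∀ a ∈ s, Integrable (g a) μ) (hfac : ∀ a ∈ s, μ[g a | m] =ᵐ[μ] p a * q a) :
    μ[fun ω => f ω + ∑ a ∈ s, g a ω | m] =ᵐ[μ]
      fun ω => μ[f | m] ω + ∑ a ∈ s, p a ω * q a ω := by
  have hsum_eq : (fun ω => f ω + ∑ a ∈ s, g a ω) = f + ∑ a ∈ s, g a := by
    ext ω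
    rw [Pi.add_apply, Finset.sum_apply]
  have hfac_all : ∀ᵐ ω ∂μ, ∀ a ∈ s, μ[g a | m] ω = p a ω * q a ω :=
    (Filter.eventually_all_finset s).2 hfac
  rw [hsum_eq]
  filter_upwards [condExp_add hf (integrable_finsetSum' s hg) m, condExp_finsetSum hg m, hfac_all]
    with ω hω_add hω_sum hω_fac
  rw [hω_add, Pi.add_apply, hω_sum, Finset.sum_apply]
  exact congrArg _ (Finset.sum_congr rfl hω_fac)

end ConditionalExpectation

theorem integrable_ite_mul_of_abs_le {Ω β : Type*} [MeasurableSpace Ω] [MeasurableSpace β]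
    [MeasurableSingletonClass β] [DecidableEq β] {μ : Measure Ω} [IsFiniteMeasure μ]
    {A : Ω → β} (hA : Measurable A) (a : β) {g : Ω → ℝ} (hg : Measurable g) {M : ℝ} (hM : ∀ ω, |g ω| ≤ M) :
    Integrable (fun ω => (if A ω = a then (1 : ℝ) else 0) * g ω) μ := by
  have hind : Measurable fun ω => if A ω = a then (1 : ℝ) else 0 :=
    Measurable.ite (hA (measurableSet_singleton a)) measurable_const measurable_const
  refine Integrable.of_bound (hind.mul hg).aestronglyMeasurable M (ae_of_all μ fun ω => ?_)
  rw [Real.norm_eq_abs, abs_mul]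
  calc |if A ω = a then (1 : ℝ) else 0| * |g ω| ≤ 1 * |g ω| := by
        gcongr
        split_ifs <;> simp
    _ ≤ M := by rw [one_mul]; exact hM ω

theorem comap_prodMk_le_comap_prodMk_of_comap_le {Ω α β γ δ : Type*} [MeasurableSpace α]
    [MeasurableSpace β] [MeasurableSpace γ] [MeasurableSpace δ] {X : Ω → α} {Z : Ω → β}
    {V : Ω → γ} {W : Ω → δ}
    (h : MeasurableSpace.comap X inferInstance ≤
      MeasurableSpace.comap (fun ω => (Z ω, W ω)) inferInstance) :
    MeasurableSpace.comap (fun ω => (X ω, W ω)) inferInstance ≤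
      MeasurableSpace.comap (fun ω => (Z ω, V ω, W ω)) inferInstance := by
  let _ : MeasurableSpace Ω := MeasurableSpace.comap (fun ω => (Z ω, V ω, W ω)) inferInstance
  have hZVW : Measurable fun ω => (Z ω, V ω, W ω) := comap_measurable _
  have hX : Measurable X := measurable_iff_comap_le.2
    (h.trans ((measurable_fst.prodMk measurable_snd.snd).comp hZVW).comap_le)
  exact (hX.prodMk (measurable_snd.snd.comp hZVW)).comap_le

theorem observed_data_decomposition_multiple_treatments_general
    {Ω : Type*} [MeasurableSpace Ω] (μ : Measure Ω) [IsProbabilityMeasure μ]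
    {d m : ℕ} (H : Ω → (Fin d → ℝ)) (hH : Measurable H)
    (𝒜 : Finset ℝ)
    (A Astar : Ω → ℝ) (hA : Measurable A) (hAstar : Measurable Astar)
    (Hstar : Ω → (Fin m → ℝ))
    (hHstar_sub : MeasurableSpace.comap Hstar inferInstance ≤
      MeasurableSpace.comap (fun ω => (H ω, Astar ω)) inferInstance)
    (Y : Ω → ℝ)
    (ν : (Fin d → ℝ) → ℝ) (hνint : Integrable (fun ω => ν (H ω)) μ)
    (C : ℝ → (Fin d → ℝ) → ℝ) (hC : ∀ a ∈ 𝒜, Measurable (C a))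
    (hCbdd : ∀ a ∈ 𝒜, ∃ M, ∀ x, |C a x| ≤ M)
    (hblip : μ[Y | MeasurableSpace.comap (fun ω => (H ω, A ω)) inferInstance]
      =ᵐ[μ] fun ω => ν (H ω)
        + ∑ a ∈ 𝒜.erase 0, (if A ω = a then (1 : ℝ) else 0) * C a (H ω))
    (hcond1 : μ[Y | MeasurableSpace.comap (fun ω => (H ω, A ω, Astar ω)) inferInstance]
      =ᵐ[μ] μ[Y | MeasurableSpace.comap (fun ω => (H ω, A ω)) inferInstance])
    (hcond3 : ∀ a ∈ 𝒜.erase 0,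
      μ[fun ω => (if A ω = a then (1 : ℝ) else 0) * C a (H ω) |
          MeasurableSpace.comap (fun ω => (Hstar ω, Astar ω)) inferInstance]
        =ᵐ[μ] fun ω =>
          (μ[fun ω' => (if A ω' = a then (1 : ℝ) else 0) |
              MeasurableSpace.comap (fun ω' => (Hstar ω', Astar ω')) inferInstance]) ω
          * (μ[fun ω' => C a (H ω') |
              MeasurableSpace.comap (fun ω' => (Hstar ω', Astar ω')) inferInstance]) ω) :
    μ[Y | MeasurableSpace.comap (fun ω => (Hstar ω, Astar ω)) inferInstance]
      =ᵐ[μ] fun ω =>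
        (μ[fun ω' => ν (H ω') |
            MeasurableSpace.comap (fun ω' => (Hstar ω', Astar ω')) inferInstance]) ω
        + ∑ a ∈ 𝒜.erase 0,
          (μ[fun ω' => (if A ω' = a then (1 : ℝ) else 0) |
              MeasurableSpace.comap (fun ω' => (Hstar ω', Astar ω')) inferInstance]) ω
          * (μ[fun ω' => C a (H ω') |
              MeasurableSpace.comap (fun ω' => (Hstar ω', Astar ω')) inferInstance]) ω := by
  have hle : MeasurableSpace.comap (fun ω => (Hstar ω, Astar ω)) inferInstance ≤
      MeasurableSpace.comap (fun ω => (H ω, A ω, Astar ω)) inferInstance :=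
    comap_prodMk_le_comap_prodMk_of_comap_le hHstar_sub
  have hterm_int : ∀ a ∈ 𝒜.erase 0,
      Integrable (fun ω => (if A ω = a then (1 : ℝ) else 0) * C a (H ω)) μ := fun a ha =>
    have ha𝒜 := Finset.mem_of_mem_erase ha
    have ⟨M, hM⟩ := hCbdd a ha𝒜
    integrable_ite_mul_of_abs_le hA a ((hC a ha𝒜).comp hH) fun ω => hM (H ω)
  calc _ =ᵐ[μ] _ := condExp_ae_eq_condExp_condExp_of_condExp_ae_eq hle
        (hH.prodMk (hA.prodMk hAstar)).comap_le hcond1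
    _ =ᵐ[μ] _ := condExp_congr_ae hblip
    _ =ᵐ[μ] _ := condExp_add_sum_ae_eq_of_factorization _ hνint hterm_int hcond3

/-- Observed-data decomposition with multiple treatment alternatives: under
Condition 1 and the per-treatment Condition-3 analogue,
`E[Y | σ(H*, A*)] = E[ν(H) | σ(H*, A*)] + Σ_{a ≠ 0} E[𝟙{A = a} | σ(H*, A*)]·E[C_a(H) | σ(H*, A*)]`. -/
theorem observed_data_decomposition_multiple_treatments
    {Ω : Type*} [MeasurableSpace Ω] (μ : Measure Ω) [IsProbabilityMeasure μ]
    {d m : ℕ} (H : Ω → (Fin d → ℝ)) (hH : Measurable H)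
    (𝒜 : Finset ℝ) (h0𝒜 : (0 : ℝ) ∈ 𝒜)
    (A Astar : Ω → ℝ) (hA : Measurable A) (hAstar : Measurable Astar)
    (hArange : ∀ ω, A ω ∈ 𝒜) (hAstarrange : ∀ ω, Astar ω ∈ 𝒜)
    (Hstar : Ω → (Fin m → ℝ)) (hHstar : Measurable Hstar)
    (hHstar_sub : MeasurableSpace.comap Hstar inferInstance ≤
      MeasurableSpace.comap (fun ω => (H ω, Astar ω)) inferInstance)
    (Y : Ω → ℝ) (hY : Integrable Y μ)
    (ν : (Fin d → ℝ) → ℝ) (hν : Measurable ν) (hνint : Integrable (fun ω => ν (H ω)) μ)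
    (C : ℝ → (Fin d → ℝ) → ℝ) (hC : ∀ a ∈ 𝒜, Measurable (C a))
    (hCbdd : ∀ a ∈ 𝒜, ∃ M, ∀ x, |C a x| ≤ M)
    (hblip : μ[Y | MeasurableSpace.comap (fun ω => (H ω, A ω)) inferInstance]
      =ᵐ[μ] fun ω => ν (H ω)
        + ∑ a ∈ 𝒜.erase 0, (if A ω = a then (1 : ℝ) else 0) * C a (H ω))
    (hcond1 : μ[Y | MeasurableSpace.comap (fun ω => (H ω, A ω, Astar ω)) inferInstance]
      =ᵐ[μ] μ[Y | MeasurableSpace.comap (fun ω => (H ω, A ω)) inferInstance])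
    (hcond3 : ∀ a ∈ 𝒜.erase 0,
      μ[fun ω => (if A ω = a then (1 : ℝ) else 0) * C a (H ω) |
          MeasurableSpace.comap (fun ω => (Hstar ω, Astar ω)) inferInstance]
        =ᵐ[μ] fun ω =>
          (μ[fun ω' => (if A ω' = a then (1 : ℝ) else 0) |
              MeasurableSpace.comap (fun ω' => (Hstar ω', Astar ω')) inferInstance]) ω
          * (μ[fun ω' => C a (H ω') |
              MeasurableSpace.comap (fun ω' => (Hstar ω', Astar ω')) inferInstance]) ω) :
    μ[Y | MeasurableSpace.comap (fun ω => (Hstar ω, Astar ω)) inferInstance]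
      =ᵐ[μ] fun ω =>
        (μ[fun ω' => ν (H ω') |
            MeasurableSpace.comap (fun ω' => (Hstar ω', Astar ω')) inferInstance]) ω
        + ∑ a ∈ 𝒜.erase 0,
          (μ[fun ω' => (if A ω' = a then (1 : ℝ) else 0) |
              MeasurableSpace.comap (fun ω' => (Hstar ω', Astar ω')) inferInstance]) ω
          * (μ[fun ω' => C a (H ω') |
              MeasurableSpace.comap (fun ω' => (Hstar ω', Astar ω')) inferInstance]) ω :=
  observed_data_decomposition_multiple_treatments_general μ H hH 𝒜 A Astar hA hAstar Hstar
    hHstar_sub Y ν hνint C hC hCbdd hblip hcond1 hcond3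
end

section
/- Optimality of the weighting function in the class of linear estimating functions (the Morton bound used to choose λ*): Let 𝓖 ⊆ 𝓕 be a sub-σ-algebra, Ũ a square-integrable random variable with E[Ũ | 𝓖] = 0 μ-a.e., and D an integrable random variable. Let G be a version of E[D | 𝓖] and V a version of E[Ũ² | 𝓖], and suppose V > 0 μ-a.e. and G²/V is integrable. Then for every bounded 𝓖-measurable random variable λ, (E[λ·D])² ≤ E[λ²·Ũ²] · E[G²/V]; moreover, if λ = G/V is bounded, then it attains equality: (E[(G/V)·D])² = E[(G/V)²·Ũ²] · E[G²/V]. -/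
open MeasureTheory

/-!
Pulling the bounded `𝓖`-measurable weight `λ` out of the conditional expectations turns
`E[λ D]` into `E[λ G]` and `E[λ² Ũ²]` into `E[λ² V]`. The bound is then the Cauchy–Schwarz
inequality for `λ √V` and `G / √V`, and for `λ = G / V` both sides reduce to `E[G² / V]`.
-/

section
variable {Ω : Type*} {mΩ : MeasurableSpace Ω} {μ : Measure Ω}

theorem sq_integral_mul_le_integral_sq_mul_integral_sq {f g : Ω → ℝ}
    (hf : MemLp f 2 μ) (hg : MemLp g 2 μ) :
    (∫ ω, f ω * g ω ∂μ) ^ 2 ≤ (∫ ω, f ω ^ 2 ∂μ) * ∫ ω, g ω ^ 2 ∂μ := by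
  have inner_toLp {u v : Ω → ℝ} (hu : MemLp u 2 μ) (hv : MemLp v 2 μ) :
      inner ℝ hu.toLp hv.toLp = ∫ ω, u ω * v ω ∂μ := by
    rw [L2.inner_def]
    refine integral_congr_ae ?_
    filter_upwards [hu.coeFn_toLp, hv.coeFn_toLp] with ω hu' hv'
    simp [hu', hv', mul_comm]
  simpa only [inner_toLp hf hg, inner_toLp hf hf, inner_toLp hg hg, ← sq]
    using real_inner_mul_inner_self_le hf.toLp hg.toLp

theorem sq_integral_mul_le_integral_sq_mul_mul_integral_sq_div {a g w : Ω → ℝ}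
    (ha : AEStronglyMeasurable a μ) (hg : AEStronglyMeasurable g μ)
    (hw : AEStronglyMeasurable w μ) (hw_pos : ∀ᵐ ω ∂μ, 0 < w ω)
    (haw : Integrable (fun ω => a ω ^ 2 * w ω) μ) (hgw : Integrable (fun ω => g ω ^ 2 / w ω) μ) :
    (∫ ω, a ω * g ω ∂μ) ^ 2 ≤ (∫ ω, a ω ^ 2 * w ω ∂μ) * ∫ ω, g ω ^ 2 / w ω ∂μ := by
  have hsqrt : AEStronglyMeasurable (fun ω => √(w ω)) μ :=
    Real.continuous_sqrt.comp_aestronglyMeasurable hw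
  have ha_sq : (fun ω => (a ω * √(w ω)) ^ 2) =ᵐ[μ] fun ω => a ω ^ 2 * w ω := by
    filter_upwards [hw_pos] with ω hω
    rw [mul_pow, Real.sq_sqrt hω.le]
  have hg_sq : (fun ω => (g ω / √(w ω)) ^ 2) =ᵐ[μ] fun ω => g ω ^ 2 / w ω := by
    filter_upwards [hw_pos] with ω hω
    rw [div_pow, Real.sq_sqrt hω.le]
  have h_prod : (fun ω => a ω * √(w ω) * (g ω / √(w ω))) =ᵐ[μ] fun ω => a ω * g ω := by
    filter_upwards [hw_pos] with ω hω
    have : √(w ω) ≠ 0 := (Real.sqrt_pos.2 hω).ne'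
    field_simp
  have ha' : MemLp (fun ω => a ω * √(w ω)) 2 μ :=
    (memLp_two_iff_integrable_sq (ha.mul hsqrt)).2 (haw.congr ha_sq.symm)
  have hg' : MemLp (fun ω => g ω / √(w ω)) 2 μ :=
    (memLp_two_iff_integrable_sq (hg.div₀ hsqrt)).2 (hgw.congr hg_sq.symm)
  simpa only [integral_congr_ae h_prod, integral_congr_ae ha_sq, integral_congr_ae hg_sq]
    using sq_integral_mul_le_integral_sq_mul_integral_sq ha' hg'

theorem sq_integral_div_mul_eq_integral_sq_div_mul_mul_integral_sq_div {g w : Ω → ℝ}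
    (hw_pos : ∀ᵐ ω ∂μ, 0 < w ω) :
    (∫ ω, g ω / w ω * g ω ∂μ) ^ 2
      = (∫ ω, (g ω / w ω) ^ 2 * w ω ∂μ) * ∫ ω, g ω ^ 2 / w ω ∂μ := by
  have h_left : ∫ ω, g ω / w ω * g ω ∂μ = ∫ ω, g ω ^ 2 / w ω ∂μ :=
    integral_congr_ae (.of_forall fun ω => by ring)
  have h_right : ∫ ω, (g ω / w ω) ^ 2 * w ω ∂μ = ∫ ω, g ω ^ 2 / w ω ∂μ := by
    refine integral_congr_ae ?_
    filter_upwards [hw_pos] with ω hω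
    field_simp
  rw [h_left, h_right, sq]

theorem integral_mul_eq_integral_mul_of_ae_eq_condExp_s12 {m : MeasurableSpace Ω} (hm : m ≤ mΩ)
    [IsFiniteMeasure μ] {lam f X : Ω → ℝ} (hlam : AEStronglyMeasurable[m] lam μ) {c : ℝ}
    (hlam_bound : ∀ᵐ ω ∂μ, |lam ω| ≤ c) (hf : Integrable f μ) (hX : X =ᵐ[μ] μ[f | m]) :
    ∫ ω, lam ω * f ω ∂μ = ∫ ω, lam ω * X ω ∂μ := by
  rw [← integral_condExp hm]
  refine integral_congr_ae ?_
  filter_upwards [condExp_stronglyMeasurable_mul_of_bound₀ hm hlam hf c hlam_bound, hX]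
    with ω h_pull hXω
  exact h_pull.trans (congrArg (lam ω * ·) hXω.symm)

end

theorem morton_optimal_weighting_general
    {Ω : Type*} {mΩ : MeasurableSpace Ω} (μ : Measure Ω) [IsProbabilityMeasure μ]
    (𝓖 : MeasurableSpace Ω) (h𝓖 : 𝓖 ≤ mΩ)
    (U : Ω → ℝ) (hU2 : MemLp U 2 μ)
    (D : Ω → ℝ) (hD : Integrable D μ)
    (G : Ω → ℝ) (hGmeas : Measurable[𝓖] G) (hGver : G =ᵐ[μ] μ[D | 𝓖])
    (V : Ω → ℝ) (hVmeas : Measurable[𝓖] V) (hVver : V =ᵐ[μ] μ[fun ω => U ω ^ 2 | 𝓖])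
    (hVpos : ∀ᵐ ω ∂μ, 0 < V ω)
    (hGV : Integrable (fun ω => G ω ^ 2 / V ω) μ) :
    (∀ lam : Ω → ℝ, Measurable[𝓖] lam → (∃ M, ∀ ω, |lam ω| ≤ M) →
      (∫ ω, lam ω * D ω ∂μ) ^ 2
        ≤ (∫ ω, lam ω ^ 2 * U ω ^ 2 ∂μ) * ∫ ω, G ω ^ 2 / V ω ∂μ) ∧
    ((∃ M, ∀ ω, |G ω / V ω| ≤ M) →
      (∫ ω, (G ω / V ω) * D ω ∂μ) ^ 2
        = (∫ ω, (G ω / V ω) ^ 2 * U ω ^ 2 ∂μ) * ∫ ω, G ω ^ 2 / V ω ∂μ) := by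
  have sq_bound {lam : Ω → ℝ} {M : ℝ} (hM : ∀ ω, |lam ω| ≤ M) :
      ∀ᵐ ω ∂μ, |lam ω ^ 2| ≤ M ^ 2 :=
    .of_forall fun ω => by rw [abs_pow]; gcongr; exact hM ω
  have pull_out {lam : Ω → ℝ} (hlam : Measurable[𝓖] lam) {M : ℝ} (hM : ∀ ω, |lam ω| ≤ M) :
      ∫ ω, lam ω * D ω ∂μ = ∫ ω, lam ω * G ω ∂μ ∧
        ∫ ω, lam ω ^ 2 * U ω ^ 2 ∂μ = ∫ ω, lam ω ^ 2 * V ω ∂μ :=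
    ⟨integral_mul_eq_integral_mul_of_ae_eq_condExp_s12 h𝓖
        hlam.aestronglyMeasurable (.of_forall hM) hD hGver,
      integral_mul_eq_integral_mul_of_ae_eq_condExp_s12 h𝓖
        (hlam.pow_const 2).aestronglyMeasurable (sq_bound hM) hU2.integrable_sq hVver⟩
  refine ⟨fun lam hlam ⟨M, hM⟩ => ?_, fun ⟨M, hM⟩ => ?_⟩
  · have hlam_V_int : Integrable (fun ω => lam ω ^ 2 * V ω) μ :=
      (integrable_condExp.congr hVver.symm).bdd_mul
        ((hlam.mono h𝓖 le_rfl).pow_const 2).aestronglyMeasurable (sq_bound hM)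
    rw [(pull_out hlam hM).1, (pull_out hlam hM).2]
    exact sq_integral_mul_le_integral_sq_mul_mul_integral_sq_div
      (hlam.mono h𝓖 le_rfl).aestronglyMeasurable (hGmeas.mono h𝓖 le_rfl).aestronglyMeasurable
      (hVmeas.mono h𝓖 le_rfl).aestronglyMeasurable hVpos hlam_V_int hGV
  · obtain ⟨hD_eq, hU_eq⟩ := pull_out (lam := fun ω => G ω / V ω) (hGmeas.div hVmeas) hM
    rw [hD_eq, hU_eq]
    exact sq_integral_div_mul_eq_integral_sq_div_mul_mul_integral_sq_div hVpos

/-- Optimality of the weighting function in the class of linear estimating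
functions (the Morton bound used to choose `λ*`): for every bounded
`𝓖`-measurable `λ`, `(E[λ·D])² ≤ E[λ²·Ũ²]·E[G²/V]`, with equality attained at
`λ = G/V` whenever `G/V` is bounded. -/
theorem morton_optimal_weighting
    {Ω : Type*} {mΩ : MeasurableSpace Ω} (μ : Measure Ω) [IsProbabilityMeasure μ]
    (𝓖 : MeasurableSpace Ω) (h𝓖 : 𝓖 ≤ mΩ)
    (U : Ω → ℝ) (hU2 : MemLp U 2 μ) (hUcond : μ[U | 𝓖] =ᵐ[μ] 0)
    (D : Ω → ℝ) (hD : Integrable D μ)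
    (G : Ω → ℝ) (hGmeas : Measurable[𝓖] G) (hGver : G =ᵐ[μ] μ[D | 𝓖])
    (V : Ω → ℝ) (hVmeas : Measurable[𝓖] V) (hVver : V =ᵐ[μ] μ[fun ω => U ω ^ 2 | 𝓖])
    (hVpos : ∀ᵐ ω ∂μ, 0 < V ω)
    (hGV : Integrable (fun ω => G ω ^ 2 / V ω) μ) :
    (∀ lam : Ω → ℝ, Measurable[𝓖] lam → (∃ M, ∀ ω, |lam ω| ≤ M) →
      (∫ ω, lam ω * D ω ∂μ) ^ 2
        ≤ (∫ ω, lam ω ^ 2 * U ω ^ 2 ∂μ) * ∫ ω, G ω ^ 2 / V ω ∂μ) ∧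
    ((∃ M, ∀ ω, |G ω / V ω| ≤ M) →
      (∫ ω, (G ω / V ω) * D ω ∂μ) ^ 2
        = (∫ ω, (G ω / V ω) ^ 2 * U ω ^ 2 ∂μ) * ∫ ω, G ω ^ 2 / V ω ∂μ) :=
  morton_optimal_weighting_general μ 𝓖 h𝓖 U hU2 D hD G hGmeas hGver V hVmeas hVver hVpos hGV
end

section
/- K-stage expected pseudo-outcome identity (the induction result in the proof of Theorem 1): Let K ≥ 1 and let 𝓖₁ ⊆ 𝓖₂ ⊆ … ⊆ 𝓖_K ⊆ 𝓕 be sub-σ-algebras (the observed information σ(H_j*, A_j*) at stages j = 1, …, K). For each j let A_j be a treatment indicator (the true stage-j treatment), ν_j an integrable random variable (the treatment-free term ν_j(H_j)), C_j a bounded 𝓖_j-measurable random variable (the contrast value C_j(H_j), assumed to depend only on observed information), and π_j a bounded 𝓖_j-measurable version of E[A_j | 𝓖_j]. Let Y be integrable and define V_{K+1} = Y and V_j = ν_j + 𝟙{C_j > 0}·C_j for j = 1, …, K. Assume that for each j = 1, …, K there is a σ-algebra 𝓜_j with 𝓖_j ⊆ 𝓜_j ⊆ 𝓕 and E[V_{j+1}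 | 𝓜_j] = ν_j + A_j·C_j μ-a.e. (Condition 1 together with the stage-j Q-function recursion). Define the pseudo outcomes Ṽ_{K+1} = Y and Ṽ_j = Ṽ_{j+1} + (𝟙{C_j > 0} − π_j)·C_j for j = K, …, 1. Then for every j = 1, …, K, E[Ṽ_{j+1} | 𝓖_j] = E[ν_j | 𝓖_j] + π_j·C_j μ-a.e. -/
/-!
Two facts drive the backward induction. At stage `j`, the tower property through `𝓜_j` and
pulling the `𝓖_j`-measurable contrast `C_j` out of `E[A_j C_j | 𝓖_j]` give
`E[V_{j+1} | 𝓖_j] = E[ν_j | 𝓖_j] + π_j C_j`. The correction `(𝟙{C_j > 0} − π_j) C_j` is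
`𝓖_j`-measurable, so it turns this `π_j C_j` into `𝟙{C_j > 0} C_j`; hence `Ṽ_j` and `V_j` have the
same conditional expectation given `𝓖_j`, and by the tower property also given `𝓖_{j-1}`.
-/

open MeasureTheory Filter

namespace MeasureTheory

variable {Ω : Type*} {m m' m₀ : MeasurableSpace Ω} {μ : Measure Ω}
  {f g ν A C d π : Ω → ℝ} {M : ℝ}

lemma condExp_add_of_stronglyMeasurable_right (hm : m ≤ m₀) [SigmaFinite (μ.trim hm)]
    (hf : Integrable f μ) (hg : StronglyMeasurable[m] g) (hgi : Integrable g μ) :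
    μ[f + g | m] =ᵐ[μ] μ[f | m] + g := by
  filter_upwards [condExp_add hf hgi m] with ω hω
  rw [hω, Pi.add_apply, Pi.add_apply, condExp_of_stronglyMeasurable hm hg hgi]

lemma condExp_ae_eq_of_condExp_ae_eq_of_le (hmm' : m ≤ m') (hm' : m' ≤ m₀)
    [SigmaFinite (μ.trim hm')] (h : μ[f | m'] =ᵐ[μ] μ[g | m']) : μ[f | m] =ᵐ[μ] μ[g | m] :=
  (condExp_condExp_of_le hmm' hm').symm.trans <|
    (condExp_congr_ae h).trans (condExp_condExp_of_le hmm' hm')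

variable [IsFiniteMeasure μ]

lemma integrable_of_eq_zero_or_eq_one (hf : AEStronglyMeasurable f μ)
    (h01 : ∀ ω, f ω = 0 ∨ f ω = 1) : Integrable f μ :=
  .of_bound hf 1 <| ae_of_all _ fun ω => by rcases h01 ω with h | h <;> simp [h]

lemma condExp_ae_eq_add_mul_of_le (hmm' : m ≤ m') (hm' : m' ≤ m₀) {V : Ω → ℝ}
    (hν : Integrable ν μ) (hA : Integrable A μ) (hC : StronglyMeasurable[m] C)
    (hCbdd : ∀ ω, |C ω| ≤ M) (hπ : π =ᵐ[μ] μ[A | m]) (h : μ[V | m'] =ᵐ[μ] ν + A * C) :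
    μ[V | m] =ᵐ[μ] μ[ν | m] + π * C := by
  have hAC : Integrable (A * C) μ :=
    hA.mul_bdd ((hC.mono (hmm'.trans hm')).aestronglyMeasurable) (ae_of_all _ hCbdd)
  calc μ[V | m] =ᵐ[μ] μ[μ[V | m'] | m] := (condExp_condExp_of_le hmm' hm').symm
    _ =ᵐ[μ] μ[ν + A * C | m] := condExp_congr_ae h
    _ =ᵐ[μ] μ[ν | m] + μ[A * C | m] := condExp_add hν hAC m
    _ =ᵐ[μ] μ[ν | m] + π * C := by
      filter_upwards [condExp_mul_of_stronglyMeasurable_right hC hAC hA, hπ] with ω hAC hπ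
      simp only [Pi.add_apply, Pi.mul_apply, hAC, hπ]

lemma condExp_add_sub_mul_ae_eq (hm : m ≤ m₀) (hf : Integrable f μ) (hν : Integrable ν μ)
    (hd : StronglyMeasurable[m] d) (hdi : Integrable d μ) (hπ : StronglyMeasurable[m] π)
    (hπi : Integrable π μ) (hC : StronglyMeasurable[m] C) (hCbdd : ∀ ω, |C ω| ≤ M)
    (h : μ[f | m] =ᵐ[μ] μ[ν | m] + π * C) :
    μ[f + (d - π) * C | m] =ᵐ[μ] μ[ν + d * C | m] := by
  have hCm : AEStronglyMeasurable C μ := (hC.mono hm).aestronglyMeasurable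
  calc μ[f + (d - π) * C | m]
      =ᵐ[μ] μ[f | m] + (d - π) * C := condExp_add_of_stronglyMeasurable_right hm hf
        ((hd.sub hπ).mul hC) ((hdi.sub hπi).mul_bdd hCm (ae_of_all _ hCbdd))
    _ =ᵐ[μ] μ[ν | m] + d * C := by
      filter_upwards [h] with ω hω
      simp only [Pi.add_apply, Pi.mul_apply, Pi.sub_apply, hω]
      ring
    _ =ᵐ[μ] μ[ν + d * C | m] := (condExp_add_of_stronglyMeasurable_right hm hν (hd.mul hC)
        (hdi.mul_bdd hCm (ae_of_all _ hCbdd))).symm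

end MeasureTheory

section PseudoOutcome

variable {Ω : Type*} {m m' m₀ : MeasurableSpace Ω} {μ : Measure Ω} [IsFiniteMeasure μ]
  {f ν A C π : Ω → ℝ} {M : ℝ}

lemma pseudoOutcome_step (hmm' : m ≤ m') (hm' : m' ≤ m₀) (hf : Integrable f μ)
    (hν : Integrable ν μ) (hC : Measurable[m'] C) (hCbdd : ∀ ω, |C ω| ≤ M)
    (hπ : Measurable[m'] π) (hπA : π =ᵐ[μ] μ[A | m'])
    (h : μ[f | m'] =ᵐ[μ] μ[ν | m'] + π * C) :
    Integrable (fun ω => f ω + ((if 0 < C ω then (1 : ℝ) else 0) - π ω) * C ω) μ ∧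
      μ[fun ω => f ω + ((if 0 < C ω then (1 : ℝ) else 0) - π ω) * C ω | m] =ᵐ[μ]
        μ[fun ω => ν ω + (if 0 < C ω then (1 : ℝ) else 0) * C ω | m] := by
  have hd : Measurable[m'] fun ω => if 0 < C ω then (1 : ℝ) else 0 :=
    .ite (measurableSet_lt measurable_const hC) measurable_const measurable_const
  have hdi : Integrable (fun ω => if 0 < C ω then (1 : ℝ) else 0) μ :=
    integrable_of_eq_zero_or_eq_one (hd.mono hm' le_rfl).aestronglyMeasurable
      fun ω => (ite_eq_or_eq _ _ _).symm
  have hπi : Integrable π μ := integrable_condExp.congr hπA.symm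
  refine ⟨hf.add ((hdi.sub hπi).mul_bdd (hC.mono hm' le_rfl).aestronglyMeasurable
    (ae_of_all _ hCbdd)), condExp_ae_eq_of_condExp_ae_eq_of_le hmm' hm' ?_⟩
  exact condExp_add_sub_mul_ae_eq hm' hf hν hd.stronglyMeasurable hdi hπ.stronglyMeasurable hπi
    hC.stronglyMeasurable hCbdd h

end PseudoOutcome

theorem K_stage_expected_pseudo_outcome_general
    {Ω : Type*} {mΩ : MeasurableSpace Ω} (μ : Measure Ω) [IsProbabilityMeasure μ]
    (K : ℕ)
    (𝓖 : ℕ → MeasurableSpace Ω)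
    (h𝓖mono : ∀ j, 1 ≤ j → j < K → 𝓖 j ≤ 𝓖 (j + 1))
    (A : ℕ → Ω → ℝ) (hA : ∀ j, 1 ≤ j → j ≤ K → Measurable (A j))
    (hA01 : ∀ j, 1 ≤ j → j ≤ K → ∀ ω, A j ω = 0 ∨ A j ω = 1)
    (ν : ℕ → Ω → ℝ) (hν : ∀ j, 1 ≤ j → j ≤ K → Integrable (ν j) μ)
    (C : ℕ → Ω → ℝ) (hC : ∀ j, 1 ≤ j → j ≤ K → Measurable[𝓖 j] (C j))
    (hCbdd : ∀ j, 1 ≤ j → j ≤ K → ∃ M, ∀ ω, |C j ω| ≤ M)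
    (π : ℕ → Ω → ℝ) (hπ : ∀ j, 1 ≤ j → j ≤ K → Measurable[𝓖 j] (π j))
    (hπver : ∀ j, 1 ≤ j → j ≤ K → π j =ᵐ[μ] μ[A j | 𝓖 j])
    (Y : Ω → ℝ) (hY : Integrable Y μ)
    -- the value functions V_{K+1} = Y and V_j = ν_j + 𝟙{C_j > 0}·C_j
    (V : ℕ → Ω → ℝ) (hVtop : V (K + 1) = Y)
    (hV : ∀ j, 1 ≤ j → j ≤ K →
      V j = fun ω => ν j ω + (if 0 < C j ω then (1 : ℝ) else 0) * C j ω)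
    -- Condition 1 together with the stage-j Q-function recursion
    (h𝓜 : ∀ j, 1 ≤ j → j ≤ K → ∃ 𝓜 : MeasurableSpace Ω, 𝓖 j ≤ 𝓜 ∧ 𝓜 ≤ mΩ ∧
      μ[V (j + 1) | 𝓜] =ᵐ[μ] fun ω => ν j ω + A j ω * C j ω)
    -- the modified pseudo outcomes Ṽ_{K+1} = Y, Ṽ_j = Ṽ_{j+1} + (𝟙{C_j > 0} − π_j)·C_j
    (Vt : ℕ → Ω → ℝ) (hVttop : Vt (K + 1) = Y)
    (hVt : ∀ j, 1 ≤ j → j ≤ K →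
      Vt j = fun ω => Vt (j + 1) ω + ((if 0 < C j ω then (1 : ℝ) else 0) - π j ω) * C j ω) :
    ∀ j, 1 ≤ j → j ≤ K →
      μ[Vt (j + 1) | 𝓖 j] =ᵐ[μ] fun ω => (μ[ν j | 𝓖 j]) ω + π j ω * C j ω := by
  have stage : ∀ j, 1 ≤ j → j ≤ K → μ[V (j + 1) | 𝓖 j] =ᵐ[μ] μ[ν j | 𝓖 j] + π j * C j := by
    intro j hj hjK
    obtain ⟨𝓜, hG𝓜, h𝓜le, hrec⟩ := h𝓜 j hj hjK
    obtain ⟨M, hM⟩ := hCbdd j hj hjK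
    exact condExp_ae_eq_add_mul_of_le hG𝓜 h𝓜le (hν j hj hjK)
      (integrable_of_eq_zero_or_eq_one (hA j hj hjK).aestronglyMeasurable (hA01 j hj hjK))
      (hC j hj hjK).stronglyMeasurable hM (hπver j hj hjK) hrec
  have pseudo : ∀ j, 1 ≤ j → j ≤ K →
      Integrable (Vt (j + 1)) μ ∧ μ[Vt (j + 1) | 𝓖 j] =ᵐ[μ] μ[V (j + 1) | 𝓖 j] := by
    intro j hj hjK
    induction hjK using Nat.decreasingInduction with
    | self => rw [hVttop, hVtop]; exact ⟨hY, .rfl⟩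
    | of_succ k hk ih =>
      have hk1 : 1 ≤ k + 1 := Nat.le_add_left 1 k
      obtain ⟨hint, heq⟩ := ih hk1
      obtain ⟨𝓜, hG𝓜, h𝓜le, -⟩ := h𝓜 (k + 1) hk1 hk
      obtain ⟨M, hM⟩ := hCbdd (k + 1) hk1 hk
      rw [hVt (k + 1) hk1 hk, hV (k + 1) hk1 hk]
      exact pseudoOutcome_step (h𝓖mono k hj hk) (hG𝓜.trans h𝓜le) hint (hν (k + 1) hk1 hk)
        (hC (k + 1) hk1 hk) hM (hπ (k + 1) hk1 hk) (hπver (k + 1) hk1 hk)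
        (heq.trans (stage (k + 1) hk1 hk))
  exact fun j hj hjK => (pseudo j hj hjK).2.trans (stage j hj hjK)

/-- K-stage expected pseudo-outcome identity (the backward-induction result in
the proof of Theorem 1): for each stage `j = 1, …, K`,
`E[Ṽ_{j+1} | 𝓖_j] = E[ν_j | 𝓖_j] + π_j·C_j`. -/
theorem K_stage_expected_pseudo_outcome
    {Ω : Type*} {mΩ : MeasurableSpace Ω} (μ : Measure Ω) [IsProbabilityMeasure μ]
    (K : ℕ) (hK : 1 ≤ K)
    (𝓖 : ℕ → MeasurableSpace Ω)
    (h𝓖mono : ∀ j, 1 ≤ j → j < K → 𝓖 j ≤ 𝓖 (j + 1)) (h𝓖le : ∀ j, 1 ≤ j → j ≤ K → 𝓖 j ≤ mΩ)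
    (A : ℕ → Ω → ℝ) (hA : ∀ j, 1 ≤ j → j ≤ K → Measurable (A j))
    (hA01 : ∀ j, 1 ≤ j → j ≤ K → ∀ ω, A j ω = 0 ∨ A j ω = 1)
    (ν : ℕ → Ω → ℝ) (hν : ∀ j, 1 ≤ j → j ≤ K → Integrable (ν j) μ)
    (C : ℕ → Ω → ℝ) (hC : ∀ j, 1 ≤ j → j ≤ K → Measurable[𝓖 j] (C j))
    (hCbdd : ∀ j, 1 ≤ j → j ≤ K → ∃ M, ∀ ω, |C j ω| ≤ M)
    (π : ℕ → Ω → ℝ) (hπ : ∀ j, 1 ≤ j → j ≤ K → Measurable[𝓖 j] (π j))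
    (hπbdd : ∀ j, 1 ≤ j → j ≤ K → ∃ M, ∀ ω, |π j ω| ≤ M)
    (hπver : ∀ j, 1 ≤ j → j ≤ K → π j =ᵐ[μ] μ[A j | 𝓖 j])
    (Y : Ω → ℝ) (hY : Integrable Y μ)
    -- the value functions V_{K+1} = Y and V_j = ν_j + 𝟙{C_j > 0}·C_j
    (V : ℕ → Ω → ℝ) (hVtop : V (K + 1) = Y)
    (hV : ∀ j, 1 ≤ j → j ≤ K →
      V j = fun ω => ν j ω + (if 0 < C j ω then (1 : ℝ) else 0) * C j ω)
    -- Condition 1 together with the stage-j Q-function recursion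
    (h𝓜 : ∀ j, 1 ≤ j → j ≤ K → ∃ 𝓜 : MeasurableSpace Ω, 𝓖 j ≤ 𝓜 ∧ 𝓜 ≤ mΩ ∧
      μ[V (j + 1) | 𝓜] =ᵐ[μ] fun ω => ν j ω + A j ω * C j ω)
    -- the modified pseudo outcomes Ṽ_{K+1} = Y, Ṽ_j = Ṽ_{j+1} + (𝟙{C_j > 0} − π_j)·C_j
    (Vt : ℕ → Ω → ℝ) (hVttop : Vt (K + 1) = Y)
    (hVt : ∀ j, 1 ≤ j → j ≤ K →
      Vt j = fun ω => Vt (j + 1) ω + ((if 0 < C j ω then (1 : ℝ) else 0) - π j ω) * C j ω) :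
    ∀ j, 1 ≤ j → j ≤ K →
      μ[Vt (j + 1) | 𝓖 j] =ᵐ[μ] fun ω => (μ[ν j | 𝓖 j]) ω + π j ω * C j ω :=
  K_stage_expected_pseudo_outcome_general μ K 𝓖 h𝓖mono A hA hA01 ν hν C hC hCbdd π hπ hπver Y hY V
    hVtop hV h𝓜 Vt hVttop hVt
end
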